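/- arXiv:2312.14587 — 4 statements merged into one kernel-verified Lean document; each statement's English description precedes it below -/
import Mathlib

section
/- For every well-quasi-order A, the maximal order type of its finitary powerset satisfies 1 + o(A) ≤ o(Pf(A)) ≤ 2^{o(A)}, where + is ordinal addition and 2^{o(A)} is ordinal exponentiation with base 2. -/
open Ordinal

universe u

/-- A preordered type is a well-quasi-order when every infinite sequence
contains an increasing pair. -/
def IsWqo (A : Type u) [Preorder A] : Prop :=
  ∀ f : ℕ → A, ∃ i j : ℕ, i < j ∧ f i ≤ f j

/-- In the tree of finite sequences satisfying `P` (ordered by reverse prefix),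
`t` is a child of `s` when `t` extends `s` by one element and satisfies `P`. -/
def ExtRel {A : Type u} (P : List A → Prop) (t s : List A) : Prop :=
  P t ∧ ∃ a : A, t = s ++ [a]

/-- The ordinal rank of the tree of finite sequences satisfying `P`, i.e. the rank of its
root (the empty sequence): the rank of a node is `0` on leaves and otherwise the supremum
of the successors of the ranks of its children.  (Junk value `0` when the tree is not
well-founded; in the statements below the wqo hypotheses guarantee well-foundedness.) -/
noncomputable def treeRank {A : Type u} (P : List A → Prop) : Ordinal.{u} :=
  @dite _ (Acc (ExtRel P) ([] : List A)) (Classical.dec _) (fun h => h.rank) (fun _ => 0)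

/-- The maximal order type `o(A)`: the rank of the tree `Bad(A)` of bad sequences. -/
noncomputable def mot (A : Type u) [Preorder A] : Ordinal.{u} :=
  treeRank (fun l : List A => l.Pairwise (fun a b => ¬ a ≤ b))

/-- The height `h(A)`: the rank of the tree `Dec(A)` of strictly decreasing sequences. -/
noncomputable def height (A : Type u) [Preorder A] : Ordinal.{u} :=
  treeRank (fun l : List A => l.Pairwise (fun a b => b < a))

/-- The width `w(A)`: the rank of the tree `Inco(A)` of sequences of pairwise
incomparable elements. -/
noncomputable def width (A : Type u) [Preorder A] : Ordinal.{u} :=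
  treeRank (fun l : List A => l.Pairwise (fun a b => ¬ a ≤ b ∧ ¬ b ≤ a))

/-- The finitary powerset: finite subsets of `A`. -/
def Pf (A : Type u) : Type u := {s : Set A // s.Finite}

/-- The Hoare embedding quasi-order on `Pf A`. -/
instance Pf.instPreorder {A : Type u} [Preorder A] : Preorder (Pf A) where
  le S T := ∀ a ∈ S.1, ∃ b ∈ T.1, a ≤ b
  le_refl S a ha := ⟨a, ha, le_refl a⟩
  le_trans S T U h1 h2 a ha := by
    obtain ⟨b, hb, hab⟩ := h1 a ha
    obtain ⟨c, hc, hbc⟩ := h2 b hb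
    exact ⟨c, hc, le_trans hab hbc⟩

/-! ### Infrastructure -/

section Infra

variable {A : Type u}

/-- The predicate cutting out the tree of bad sequences. -/
abbrev badP (A : Type u) [Preorder A] : List A → Prop :=
  fun l => l.Pairwise (fun a b => ¬ a ≤ b)

/-- From non-accessibility, extract a child which is also non-accessible. -/
lemma exists_child_of_not_acc {α : Sort*} (r : α → α → Prop) {x : α} (h : ¬ Acc r x) :
    ∃ y, r y x ∧ ¬ Acc r y := by
  by_contra hc
  push_neg at hc
  exact h (Acc.intro x hc)

/-- If every infinite sequence contains a "non-R" pair (i < j with ¬ R (f i) (f j)),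
then every node of the tree of R-pairwise lists is accessible. -/
lemma acc_pairwise {α : Type u} (R : α → α → Prop)
    (hR : ∀ f : ℕ → α, ∃ i j : ℕ, i < j ∧ ¬ R (f i) (f j)) (l : List α) :
    Acc (ExtRel (fun l : List α => l.Pairwise R)) l := by
  set E := ExtRel (fun l : List α => l.Pairwise R) with hE
  by_contra h
  have step : ∀ p : {l : List α // ¬ Acc E l}, {l' : List α // E l' p.1 ∧ ¬ Acc E l'} :=
    fun p => Classical.indefiniteDescription _ (by
      obtain ⟨y, hy1, hy2⟩ := exists_child_of_not_acc E p.2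
      exact ⟨y, hy1, hy2⟩)
  let g : ℕ → {l : List α // ¬ Acc E l} := fun n =>
    Nat.rec ⟨l, h⟩ (fun _ p => ⟨(step p).1, (step p).2.2⟩) n
  have hg : ∀ n, E (g (n+1)).1 (g n).1 := fun n => (step (g n)).2.1
  have hbad : ∀ n, ((g (n+1)).1).Pairwise R := fun n => (hg n).1
  let a : ℕ → α := fun n => Classical.choose (hg n).2
  have ha : ∀ n, (g (n+1)).1 = (g n).1 ++ [a n] := fun n => Classical.choose_spec (hg n).2
  have hmono : ∀ m n, m ≤ n → (g m).1 <+: (g n).1 := by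
    intro m n hmn
    induction n with
    | zero => simp_all
    | succ k ih =>
      rcases Nat.lt_or_ge m (k+1) with hk | hk
      · refine (ih (Nat.lt_succ_iff.mp hk)).trans ?_
        rw [ha k]; exact ⟨[a k], rfl⟩
      · have : m = k + 1 := le_antisymm hmn hk
        subst this; exact List.prefix_refl _
  obtain ⟨i, j, hij, hR'⟩ := hR a
  apply hR'
  obtain ⟨s, hs⟩ := hmono (i+1) j hij
  have hsplit : (g (j+1)).1 = (g (i+1)).1 ++ (s ++ [a j]) := by
    rw [ha j, ← hs, List.append_assoc]
  have hpw := hbad j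
  rw [hsplit, List.pairwise_append] at hpw
  refine hpw.2.2 (a i) ?_ (a j) (by simp)
  rw [ha i]; simp

/-- wqo implies all nodes of the bad-sequence tree are accessible. -/
lemma acc_bad_of_wqo [Preorder A] (hA : IsWqo A) (l : List A) :
    Acc (ExtRel (badP A)) l := by
  apply acc_pairwise
  intro f
  obtain ⟨i, j, hij, hle⟩ := hA f
  exact ⟨i, j, hij, not_not.mpr hle⟩

lemma sublistForall₂_dom {α : Type*} {r : α → α → Prop} :
    ∀ {l₁ l₂ : List α}, List.SublistForall₂ r l₁ l₂ → ∀ a ∈ l₁, ∃ b ∈ l₂, r a b := by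
  intro l₁ l₂ h
  induction h with
  | nil => intro a ha; simp at ha
  | @cons a b l₁ l₂ hr hsub ih =>
    intro x hx
    rcases List.mem_cons.mp hx with rfl | hx
    · exact ⟨b, List.mem_cons_self, hr⟩
    · obtain ⟨c, hc, hrc⟩ := ih x hx
      exact ⟨c, List.mem_cons_of_mem _ hc, hrc⟩
  | @cons_right a l₁ l₂ hsub ih =>
    intro x hx
    obtain ⟨c, hc, hrc⟩ := ih x hx
    exact ⟨c, List.mem_cons_of_mem _ hc, hrc⟩

/-- Higman: the finitary powerset of a wqo is a wqo. -/
lemma isWqo_pf [Preorder A] (hA : IsWqo A) : IsWqo (Pf A) := by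
  intro f
  have hpwo : (Set.univ : Set A).PartiallyWellOrderedOn (· ≤ ·) := fun g => hA (fun n => (g n).1)
  have hH := hpwo.partiallyWellOrderedOn_sublistForall₂ (· ≤ ·)
  let L : ℕ → List A := fun n => ((f n).2.toFinset).toList
  obtain ⟨m, n, hmn, hsub⟩ := hH (fun n => ⟨L n, fun x _ => Set.mem_univ x⟩)
  refine ⟨m, n, hmn, ?_⟩
  intro a ha
  have haL : a ∈ L m := by
    simp only [L, Finset.mem_toList, Set.Finite.mem_toFinset]; exact ha
  obtain ⟨b, hb, hab⟩ := sublistForall₂_dom (l₁ := L m) (l₂ := L n) hsub a haL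
  refine ⟨b, ?_, hab⟩
  simpa only [L, Finset.mem_toList, Set.Finite.mem_toFinset] using hb

end Infra

/-! ### The lower bound -/

section LB

variable {A : Type u} [Preorder A]

noncomputable def sing (a : A) : Pf A := ⟨{a}, Set.finite_singleton a⟩

noncomputable def emp : Pf A := ⟨∅, Set.finite_empty⟩

lemma sing_le_sing {a b : A} : sing a ≤ sing b ↔ a ≤ b := by
  constructor
  · intro h
    obtain ⟨c, hc, hac⟩ := h a (by simp [sing])
    simp only [sing, Set.mem_singleton_iff] at hc
    subst hc; exact hac
  · intro h x hx
    simp only [sing, Set.mem_singleton_iff] at hx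
    subst hx; exact ⟨b, by simp [sing], h⟩

lemma not_sing_le_emp (a : A) : ¬ (sing a ≤ emp) := by
  intro h
  obtain ⟨b, hb, -⟩ := h a (by simp [sing])
  simp [emp] at hb

lemma bad_map {l : List A} (hl : badP A l) : badP (Pf A) (l.map sing) := by
  show List.Pairwise _ (l.map sing)
  rw [List.pairwise_map]
  exact hl.imp (fun h hle => h (sing_le_sing.mp hle))

lemma bad_map_emp {l : List A} (hl : badP A l) : badP (Pf A) (l.map sing ++ [emp]) := by
  show List.Pairwise _ (l.map sing ++ [emp])
  rw [List.pairwise_append]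
  refine ⟨bad_map hl, List.pairwise_singleton _ _, ?_⟩
  intro x hx y hy
  simp only [List.mem_singleton] at hy
  subst hy
  obtain ⟨a, -, rfl⟩ := List.mem_map.mp hx
  exact not_sing_le_emp a

/-- Key lower-bound lemma. -/
lemma one_add_rank_le :
    ∀ (l : List A) (h : Acc (ExtRel (badP A)) l), badP A l →
      ∀ (h' : Acc (ExtRel (badP (Pf A))) (l.map sing)), 1 + h.rank ≤ h'.rank := by
  intro l h
  induction h with
  | intro x hx ih =>
    intro hbad h'
    rw [Acc.rank_eq]
    have hempchild : ExtRel (badP (Pf A)) (x.map sing ++ [emp]) (x.map sing) :=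
      ⟨bad_map_emp hbad, emp, rfl⟩
    have hpos : 1 ≤ h'.rank := by
      have := Acc.rank_lt_of_rel h' hempchild
      exact Order.one_le_iff_pos.mpr (lt_of_le_of_lt zero_le this)
    rcases isEmpty_or_nonempty {b // ExtRel (badP A) b x} with hem | hne
    · rw [ciSup_of_empty]
      simpa using hpos
    · rw [(Ordinal.isNormal_add_right 1).map_iSup (Ordinal.bddAbove_range _)]
      apply Ordinal.iSup_le
      rintro ⟨b, hb⟩
      have hbbad : badP A b := hb.1
      obtain ⟨a, rfl⟩ := hb.2
      have hchild' : ExtRel (badP (Pf A)) ((x ++ [a]).map sing) (x.map sing) := by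
        refine ⟨bad_map hbbad, sing a, ?_⟩
        simp
      have hacc' : Acc (ExtRel (badP (Pf A))) ((x ++ [a]).map sing) := h'.inv hchild'
      have hIH := ih _ hb hbbad hacc'
      rw [Ordinal.add_succ]
      calc Order.succ (1 + Acc.rank _) ≤ Order.succ hacc'.rank := Order.succ_le_succ hIH
        _ ≤ h'.rank := Order.succ_le_of_lt (Acc.rank_lt_of_rel h' hchild')

lemma lower_bound (hA : IsWqo A) : 1 + mot A ≤ mot (Pf A) := by
  have hAccA : Acc (ExtRel (badP A)) ([] : List A) := acc_bad_of_wqo hA []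
  have hAccP : Acc (ExtRel (badP (Pf A))) ([] : List (Pf A)) :=
    acc_bad_of_wqo (isWqo_pf hA) []
  have h1 : mot A = hAccA.rank := by
    rw [mot, treeRank, dif_pos hAccA]
  have h2 : mot (Pf A) = hAccP.rank := by
    rw [mot, treeRank, dif_pos hAccP]
  rw [h1, h2]
  have := one_add_rank_le ([] : List A) hAccA (List.Pairwise.nil) hAccP
  exact this

end LB


namespace NaturalOps

/-- Natural (Hessenberg) sum of ordinals. -/
noncomputable def nadd : Ordinal.{u} → Ordinal.{u} → Ordinal.{u}
  | a, b => max (⨆ x : Set.Iio a, Order.succ (nadd x.1 b)) (⨆ y : Set.Iio b, Order.succ (nadd a y.1))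
termination_by a b => (a, b)
decreasing_by
  · exact Prod.Lex.left _ _ x.2
  · exact Prod.Lex.right _ y.2

infixl:65 " ♯ " => nadd

theorem nadd_def (a b : Ordinal.{u}) : a ♯ b =
    max (⨆ x : Set.Iio a, Order.succ (x.1 ♯ b)) (⨆ y : Set.Iio b, Order.succ (a ♯ y.1)) := by
  rw [nadd]

theorem lt_nadd_of_lt_left {a a' : Ordinal.{u}} (b : Ordinal.{u}) (h : a' < a) : a' ♯ b < a ♯ b := by
  rw [nadd_def a b]
  refine (Order.lt_succ (a' ♯ b)).trans_le (le_max_of_le_left ?_)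
  exact le_ciSup (f := fun x : Set.Iio a => Order.succ (x.1 ♯ b)) Ordinal.bddAbove_of_small ⟨a', h⟩

theorem lt_nadd_of_lt_right (a : Ordinal.{u}) {b b' : Ordinal.{u}} (h : b' < b) : a ♯ b' < a ♯ b := by
  rw [nadd_def a b]
  refine (Order.lt_succ (a ♯ b')).trans_le (le_max_of_le_right ?_)
  exact le_ciSup (f := fun y : Set.Iio b => Order.succ (a ♯ y.1)) Ordinal.bddAbove_of_small ⟨b', h⟩

theorem nadd_le_iff {a b c : Ordinal.{u}} :
    a ♯ b ≤ c ↔ (∀ a' < a, a' ♯ b < c) ∧ ∀ b' < b, a ♯ b' < c := by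
  constructor
  · intro h
    exact ⟨fun a' ha => (lt_nadd_of_lt_left b ha).trans_le h,
      fun b' hb => (lt_nadd_of_lt_right a hb).trans_le h⟩
  · rintro ⟨h1, h2⟩
    rw [nadd_def a b]
    exact max_le (ciSup_le' fun x => Order.succ_le_of_lt (h1 x.1 x.2))
      (ciSup_le' fun y => Order.succ_le_of_lt (h2 y.1 y.2))

theorem lt_nadd_iff {a b d : Ordinal.{u}} :
    d < a ♯ b ↔ (∃ a' < a, d ≤ a' ♯ b) ∨ ∃ b' < b, d ≤ a ♯ b' := by
  constructor
  · intro h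
    by_contra hc
    push_neg at hc
    exact absurd (nadd_le_iff.mpr ⟨hc.1, hc.2⟩) (not_le.mpr h)
  · rintro (⟨a', ha, hd⟩ | ⟨b', hb, hd⟩)
    · exact hd.trans_lt (lt_nadd_of_lt_left b ha)
    · exact hd.trans_lt (lt_nadd_of_lt_right a hb)

theorem nadd_comm (a b : Ordinal.{u}) : a ♯ b = b ♯ a := by
  induction a using Ordinal.induction generalizing b with
  | h a IHa =>
    induction b using Ordinal.induction with
    | h b IHb =>
      apply le_antisymm
      · refine nadd_le_iff.mpr ⟨fun a' ha => ?_, fun b' hb => ?_⟩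
        · rw [IHa a' ha]; exact lt_nadd_of_lt_right b ha
        · rw [IHb b' hb]; exact lt_nadd_of_lt_left a hb
      · refine nadd_le_iff.mpr ⟨fun b' hb => ?_, fun a' ha => ?_⟩
        · rw [← IHb b' hb]; exact lt_nadd_of_lt_right a hb
        · rw [← IHa a' ha]; exact lt_nadd_of_lt_left b ha

theorem nadd_lt_nadd_left {b c : Ordinal.{u}} (h : b < c) (a : Ordinal.{u}) : a ♯ b < a ♯ c :=
  lt_nadd_of_lt_right a h

theorem nadd_lt_nadd_right {b c : Ordinal.{u}} (h : b < c) (a : Ordinal.{u}) : b ♯ a < c ♯ a :=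
  lt_nadd_of_lt_left a h

theorem nadd_le_nadd_left {b c : Ordinal.{u}} (h : b ≤ c) (a : Ordinal.{u}) : a ♯ b ≤ a ♯ c := by
  rcases h.lt_or_eq with h | rfl
  · exact (nadd_lt_nadd_left h a).le
  · exact le_rfl

theorem nadd_le_nadd_right {b c : Ordinal.{u}} (h : b ≤ c) (a : Ordinal.{u}) : b ♯ a ≤ c ♯ a := by
  rcases h.lt_or_eq with h | rfl
  · exact (nadd_lt_nadd_right h a).le
  · exact le_rfl

theorem nadd_le_nadd {a b c d : Ordinal.{u}} (h₁ : a ≤ b) (h₂ : c ≤ d) : a ♯ c ≤ b ♯ d :=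
  (nadd_le_nadd_left h₂ a).trans (nadd_le_nadd_right h₁ d)

theorem nadd_lt_nadd {a b c d : Ordinal.{u}} (h₁ : a < b) (h₂ : c < d) : a ♯ c < b ♯ d :=
  (nadd_lt_nadd_left h₂ a).trans (nadd_lt_nadd_right h₁ d)

theorem le_nadd_self (a b : Ordinal.{u}) : a ≤ a ♯ b := by
  induction a using Ordinal.induction with
  | h a IH =>
    refine le_of_forall_lt fun c hc => ?_
    exact (IH c hc).trans_lt (lt_nadd_of_lt_left b hc)

@[simp]
theorem nadd_zero (a : Ordinal.{u}) : a ♯ 0 = a := by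
  induction a using Ordinal.induction with
  | h a IH =>
    refine le_antisymm (nadd_le_iff.mpr ⟨fun a' ha => ?_, fun b' hb => ?_⟩) (le_nadd_self a 0)
    · rw [IH a' ha]; exact ha
    · exact absurd hb (not_lt_of_ge zero_le)

@[simp]
theorem zero_nadd (a : Ordinal.{u}) : 0 ♯ a = a := by
  rw [nadd_comm, nadd_zero]

theorem add_le_nadd (a b : Ordinal.{u}) : a + b ≤ a ♯ b := by
  induction b using Ordinal.induction with
  | h b IH =>
    refine le_of_forall_lt fun c hc => ?_
    rcases lt_or_ge c a with hca | hac
    · exact hca.trans_le (le_nadd_self a b)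
    · rw [← Ordinal.add_sub_cancel_of_le hac] at hc ⊢
      have hd : c - a < b := (add_lt_add_iff_left a).mp hc
      exact (IH _ hd).trans_lt (lt_nadd_of_lt_right a hd)

theorem nadd_assoc (a b c : Ordinal.{u}) : a ♯ b ♯ c = a ♯ (b ♯ c) := by
  induction a using Ordinal.induction generalizing b c with
  | h a IHa =>
    induction b using Ordinal.induction generalizing c with
    | h b IHb =>
      induction c using Ordinal.induction with
      | h c IHc =>
        apply le_antisymm
        · refine nadd_le_iff.mpr ⟨fun d hd => ?_, fun c' hc => ?_⟩
          · rcases lt_nadd_iff.mp hd with ⟨a', ha, hd'⟩ | ⟨b', hb, hd'⟩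
            · refine (nadd_le_nadd_right hd' c).trans_lt ?_
              rw [IHa a' ha]; exact lt_nadd_of_lt_left _ ha
            · refine (nadd_le_nadd_right hd' c).trans_lt ?_
              rw [IHb b' hb]; exact lt_nadd_of_lt_right a (lt_nadd_of_lt_left c hb)
          · rw [IHc c' hc]; exact lt_nadd_of_lt_right a (lt_nadd_of_lt_right b hc)
        · refine nadd_le_iff.mpr ⟨fun a' ha => ?_, fun d hd => ?_⟩
          · rw [← IHa a' ha]; exact lt_nadd_of_lt_left c (lt_nadd_of_lt_left b ha)
          · rcases lt_nadd_iff.mp hd with ⟨b', hb, hd'⟩ | ⟨c', hc, hd'⟩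
            · refine (nadd_le_nadd_left hd' a).trans_lt ?_
              rw [← IHb b' hb]; exact lt_nadd_of_lt_left c (lt_nadd_of_lt_right a hb)
            · refine (nadd_le_nadd_left hd' a).trans_lt ?_
              rw [← IHc c' hc]; exact lt_nadd_of_lt_right _ hc

theorem nadd_succ (a b : Ordinal.{u}) : a ♯ Order.succ b = Order.succ (a ♯ b) := by
  induction a using Ordinal.induction with
  | h a IH =>
    apply le_antisymm
    · refine nadd_le_iff.mpr ⟨fun a' ha => ?_, fun b' hb => ?_⟩
      · rw [IH a' ha]; exact Order.succ_lt_succ (lt_nadd_of_lt_left b ha)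
      · exact Order.lt_succ_iff.mpr (nadd_le_nadd_left (Order.lt_succ_iff.mp hb) a)
    · exact Order.succ_le_of_lt (lt_nadd_of_lt_right a (Order.lt_succ b))

theorem nadd_nat (a : Ordinal.{u}) (n : ℕ) : a ♯ (n : Ordinal.{u}) = a + n := by
  induction n with
  | zero => simp
  | succ n ih =>
    rw [Nat.cast_succ, Ordinal.add_one_eq_succ, nadd_succ, ih, Ordinal.add_succ]

end NaturalOps

namespace PfMot
open NaturalOps


/-- The three monomial facts about `ω ^ e`, proven by simultaneous transfinite induction. -/
theorem monomial_pack (e : Ordinal.{u}) :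
    (∀ x y : Ordinal.{u}, x < ω ^ e → y < ω ^ e → x ♯ y < ω ^ e) ∧
    (∀ (s : ℕ) (r : Ordinal.{u}), r < ω ^ e → ω ^ e * s ♯ r = ω ^ e * s + r) ∧
    (∀ k m : ℕ, (ω : Ordinal.{u}) ^ e * k ♯ ω ^ e * m = ω ^ e * ((k + m : ℕ) : Ordinal)) := by
  induction e using Ordinal.induction with
  | h e IH =>
    have hw0 : (ω : Ordinal.{u}) ^ e ≠ 0 := (opow_pos e omega0_pos).ne'
    -- decomposition below a multiple
    have hdec : ∀ (s : ℕ) (x : Ordinal.{u}), x < ω ^ e * s →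
        ∃ (j : ℕ) (x' : Ordinal.{u}), j < s ∧ x' < ω ^ e ∧ x = ω ^ e * j + x' := by
      intro s x hx
      have hq : x / ω ^ e < (s : Ordinal) := (Ordinal.div_lt hw0).mpr hx
      have hqw : x / ω ^ e < ω := hq.trans (natCast_lt_omega0 s)
      obtain ⟨j, hj⟩ := lt_omega0.mp hqw
      refine ⟨j, x % (ω ^ e), ?_, Ordinal.mod_lt x hw0, ?_⟩
      · exact_mod_cast hj ▸ hq
      · rw [← hj, Ordinal.div_add_mod]
    -- closure
    have hcl : ∀ x y : Ordinal.{u}, x < ω ^ e → y < ω ^ e → x ♯ y < ω ^ e := by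
      rcases zero_or_succ_or_isSuccLimit e with he | ⟨f, rfl⟩ | he
      · subst he
        intro x y hx hy
        rw [opow_zero] at *
        rw [Ordinal.lt_one_iff_zero] at hx hy
        subst hx; subst hy
        simpa using zero_lt_one
      · intro x y hx hy
        have hmf := (IH f (Order.lt_succ f)).2.2
        rw [opow_succ] at hx hy
        have hx' : x < ω ^ f * ω := hx
        have hy' : y < ω ^ f * ω := hy
        have hwf0 : (ω : Ordinal.{u}) ^ f ≠ 0 := (opow_pos f omega0_pos).ne'
        obtain ⟨n, hn⟩ := lt_omega0.mp ((Ordinal.div_lt hwf0).mpr hx')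
        obtain ⟨m, hm⟩ := lt_omega0.mp ((Ordinal.div_lt hwf0).mpr hy')
        have hxn : x < ω ^ f * (n + 1 : ℕ) := by
          have := Ordinal.div_add_mod x (ω ^ f)
          calc x = ω ^ f * (x / ω ^ f) + x % (ω ^ f) := (Ordinal.div_add_mod x _).symm
            _ < ω ^ f * (x / ω ^ f) + ω ^ f := by
                exact add_lt_add_right (Ordinal.mod_lt x hwf0) _
            _ = ω ^ f * (x / ω ^ f + 1) := by rw [mul_add_one]
            _ = ω ^ f * ((n + 1 : ℕ) : Ordinal) := by rw [hn]; norm_cast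
        have hym : y < ω ^ f * (m + 1 : ℕ) := by
          calc y = ω ^ f * (y / ω ^ f) + y % (ω ^ f) := (Ordinal.div_add_mod y _).symm
            _ < ω ^ f * (y / ω ^ f) + ω ^ f := by
                exact add_lt_add_right (Ordinal.mod_lt y hwf0) _
            _ = ω ^ f * (y / ω ^ f + 1) := by rw [mul_add_one]
            _ = ω ^ f * ((m + 1 : ℕ) : Ordinal) := by rw [hm]; norm_cast
        calc x ♯ y < ω ^ f * ((n+1 : ℕ) : Ordinal) ♯ ω ^ f * ((m+1 : ℕ) : Ordinal) :=
              nadd_lt_nadd hxn hym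
          _ = ω ^ f * (((n+1) + (m+1) : ℕ) : Ordinal) := hmf (n+1) (m+1)
          _ < ω ^ f * ω := by
              refine mul_lt_mul_of_pos_left ?_ (opow_pos f omega0_pos)
              exact natCast_lt_omega0 _
          _ = ω ^ (Order.succ f) := (opow_succ ω f).symm
      · intro x y hx hy
        obtain ⟨e₁, he₁, hx₁⟩ := (lt_opow_of_isSuccLimit omega0_ne_zero he).mp hx
        obtain ⟨e₂, he₂, hy₂⟩ := (lt_opow_of_isSuccLimit omega0_ne_zero he).mp hy
        set f := max e₁ e₂ with hf
        have hfe : f < e := max_lt he₁ he₂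
        have hsfe : Order.succ f < e := he.succ_lt hfe
        have hclf := (IH (Order.succ f) hsfe).1
        have hx' : x < ω ^ Order.succ f :=
          hx₁.trans_le ((opow_le_opow_right omega0_pos (le_max_left _ _)).trans
            (opow_le_opow_right omega0_pos (Order.le_succ f)))
        have hy' : y < ω ^ Order.succ f :=
          hy₂.trans_le ((opow_le_opow_right omega0_pos (le_max_right _ _)).trans
            (opow_le_opow_right omega0_pos (Order.le_succ f)))
        exact (hclf x y hx' hy').trans_le (opow_le_opow_right omega0_pos hsfe.le)
    -- eqadd
    have heq : ∀ (s : ℕ) (r : Ordinal.{u}), r < ω ^ e → ω ^ e * s ♯ r = ω ^ e * s + r := by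
      intro s
      induction s using Nat.strong_induction_on with
      | _ s IHs =>
        intro r
        induction r using Ordinal.induction with
        | h r IHr =>
          intro hr
          refine le_antisymm ?_ (add_le_nadd _ _)
          rw [nadd_le_iff]
          constructor
          · intro x hx
            obtain ⟨j, x', hjs, hx', rfl⟩ := hdec s x hx
            have h1 : ω ^ e * j + x' = ω ^ e * j ♯ x' := (IHs j hjs x' hx').symm
            have h2 : x' ♯ r < ω ^ e := hcl x' r hx' hr
            calc (ω ^ e * j + x') ♯ r = (ω ^ e * j ♯ x') ♯ r := by rw [h1]
              _ = ω ^ e * j ♯ (x' ♯ r) := nadd_assoc _ _ _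
              _ = ω ^ e * j + (x' ♯ r) := IHs j hjs _ h2
              _ < ω ^ e * j + ω ^ e := add_lt_add_right h2 _
              _ = ω ^ e * ((j + 1 : ℕ) : Ordinal) := by rw [Nat.cast_succ, mul_add_one]
              _ ≤ ω ^ e * s := by
                  apply mul_le_mul_right
                  exact_mod_cast Nat.succ_le_of_lt hjs
              _ ≤ ω ^ e * s + r := le_self_add
          · intro r' hr'
            rw [IHr r' hr' (hr'.trans hr)]
            exact add_lt_add_right hr' _
    -- mono
    have hmono : ∀ k m : ℕ, (ω:Ordinal.{u}) ^ e * k ♯ ω ^ e * m = ω ^ e * ((k + m : ℕ) : Ordinal) := by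
      have main : ∀ (N k m : ℕ), k + m ≤ N → (ω:Ordinal.{u}) ^ e * k ♯ ω ^ e * m = ω ^ e * ((k + m : ℕ) : Ordinal) := by
        intro N
        induction N with
        | zero =>
          intro k m hkm
          have hk : k = 0 := by omega
          have hm : m = 0 := by omega
          subst hk; subst hm; simp
        | succ N IHN =>
          intro k m hkm
          have hhalf : ∀ (a b : ℕ) (x : Ordinal.{u}), a + b ≤ N + 1 → a + b ≤ k + m → x < ω ^ e * a →
              x ♯ ω ^ e * b < ω ^ e * ((a + b : ℕ) : Ordinal) := by
            intro a b x hab _hab2 hx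
            obtain ⟨j, x', hja, hx', rfl⟩ := hdec a x hx
            calc (ω ^ e * j + x') ♯ ω ^ e * b
                = (ω ^ e * j ♯ x') ♯ ω ^ e * b := by rw [heq j x' hx']
              _ = (ω ^ e * j ♯ ω ^ e * b) ♯ x' := by
                  rw [nadd_assoc, nadd_assoc, nadd_comm x']
              _ = ω ^ e * ((j + b : ℕ) : Ordinal) ♯ x' := by
                  rw [IHN j b (by omega)]
              _ = ω ^ e * ((j + b : ℕ) : Ordinal) + x' := heq (j+b) x' hx'
              _ < ω ^ e * ((j + b : ℕ) : Ordinal) + ω ^ e := add_lt_add_right hx' _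
              _ = ω ^ e * ((j + b + 1 : ℕ) : Ordinal) := by rw [Nat.cast_succ, mul_add_one]
              _ ≤ ω ^ e * ((a + b : ℕ) : Ordinal) := by
                  apply mul_le_mul_right
                  exact_mod_cast by omega
          refine le_antisymm ?_ ?_
          · rw [nadd_le_iff]
            constructor
            · intro x hx
              exact hhalf k m x hkm le_rfl hx
            · intro y hy
              rw [nadd_comm]
              have := hhalf m k y (by omega) (by omega) hy
              rw [show ((m + k : ℕ) : Ordinal) = ((k + m : ℕ) : Ordinal) by norm_cast; omega] at this
              exact this
          · rw [Nat.cast_add, mul_add]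
            exact add_le_nadd _ _
      intro k m
      exact main (k+m) k m le_rfl
    exact ⟨hcl, heq, hmono⟩

theorem nadd_lt_omega0_opow {e x y : Ordinal.{u}} (hx : x < ω ^ e) (hy : y < ω ^ e) :
    x ♯ y < ω ^ e := (monomial_pack e).1 x y hx hy

/-- `2 ^ c` as a monomial. -/
theorem two_opow_monomial (c : Ordinal.{u}) :
    ∃ (d : Ordinal.{u}) (n : ℕ), (2:Ordinal.{u}) ^ c = ω ^ d * ((2^n : ℕ) : Ordinal) ∧
      c = ω * d + n := by
  refine ⟨c / ω, ?_⟩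
  obtain ⟨n, hn⟩ := lt_omega0.mp (Ordinal.mod_lt c omega0_ne_zero)
  refine ⟨n, ?_, by rw [← hn, Ordinal.div_add_mod]⟩
  have h2 : ((2:ℕ) : Ordinal) = (2 : Ordinal) := by norm_cast
  have hc : c = ω * (c / ω) + (n : Ordinal) := by rw [← hn, Ordinal.div_add_mod]
  calc (2:Ordinal) ^ c = 2 ^ (ω * (c / ω) + (n : Ordinal)) := by rw [← hc]
    _ = 2 ^ (ω * (c / ω)) * 2 ^ (n : Ordinal) := opow_add _ _ _
    _ = ((2:Ordinal) ^ (ω:Ordinal)) ^ (c / ω) * 2 ^ (n : Ordinal) := by rw [opow_mul]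
    _ = ω ^ (c / ω) * 2 ^ (n : Ordinal) := by
        rw [opow_omega0 one_lt_two (by rw [← h2]; exact natCast_lt_omega0 2)]
    _ = ω ^ (c / ω) * ((2^n : ℕ) : Ordinal) := by
        rw [natCast_opow, h2, opow_natCast]

/-- Core arithmetic: `2 ^ c ♯ 2 ^ c ≤ 2 ^ (c + 1)`. -/
theorem two_opow_nadd_self (c : Ordinal.{u}) :
    (2:Ordinal.{u}) ^ c ♯ 2 ^ c ≤ 2 ^ (c + 1) := by
  obtain ⟨d, n, hdn, -⟩ := two_opow_monomial c
  have hmono := (monomial_pack d).2.2 (2^n) (2^n)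
  rw [hdn, hmono]
  have : (2:Ordinal) ^ (c+1) = 2 ^ c * 2 := by
    rw [opow_add, opow_one]
  rw [this, hdn, mul_assoc]
  apply mul_le_mul_right
  norm_cast
  omega

/-- For a limit `γ`, `2 ^ γ` is an `ω`-power. -/
theorem two_opow_limit {γ : Ordinal.{u}} (hγ : Order.IsSuccLimit γ) :
    (2:Ordinal.{u}) ^ γ = ω ^ (γ / ω) ∧ γ / ω ≠ 0 := by
  obtain ⟨hne, d, rfl⟩ := isSuccLimit_iff_omega0_dvd.mp hγ
  have hd0 : d ≠ 0 := by rintro rfl; simp at hne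
  have hdiv : ω * d / ω = d := Ordinal.mul_div_cancel d omega0_ne_zero
  constructor
  · rw [hdiv, opow_mul, opow_omega0 one_lt_two]
    have h2 : ((2:ℕ) : Ordinal) = (2 : Ordinal) := by norm_cast
    rw [← h2]; exact natCast_lt_omega0 2
  · rw [hdiv]; exact hd0

/-- Natural sums of ordinals `< 2 ^ γ` stay `< 2 ^ γ` for limit `γ`; also `+1`-closure. -/
theorem nadd_lt_two_opow_limit {γ x y : Ordinal.{u}} (hγ : Order.IsSuccLimit γ)
    (hx : x < 2 ^ γ) (hy : y < 2 ^ γ) : x ♯ y < 2 ^ γ := by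
  obtain ⟨heq, -⟩ := two_opow_limit hγ
  rw [heq] at hx hy ⊢
  exact nadd_lt_omega0_opow hx hy

theorem add_one_lt_two_opow_limit {γ x : Ordinal.{u}} (hγ : Order.IsSuccLimit γ)
    (hx : x < 2 ^ γ) : x + 1 < 2 ^ γ := by
  have h1 : (1:Ordinal) < 2 ^ γ := by
    have := hγ.pos
    calc (1:Ordinal) = 2 ^ (0:Ordinal) := (opow_zero 2).symm
      _ < 2 ^ γ := (opow_lt_opow_iff_right one_lt_two).mpr hγ.pos
  have h := nadd_lt_two_opow_limit hγ hx h1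
  have hx1 : x ♯ (1:Ordinal) = x + 1 := by
    have := nadd_nat (a := x) 1
    simpa using this
  rwa [hx1] at h




/-- Total version of `Acc.rank` at a node. -/
noncomputable def nodeRank {A : Type u} (P : List A → Prop) (l : List A) : Ordinal.{u} :=
  @dite _ (Acc (ExtRel P) l) (Classical.dec _) (fun h => h.rank) (fun _ => 0)

theorem treeRank_eq_nodeRank {A : Type u} (P : List A → Prop) :
    treeRank P = nodeRank P [] := rfl

theorem nodeRank_eq {A : Type u} {P : List A → Prop} {l : List A}
    (h : Acc (ExtRel P) l) : nodeRank P l = h.rank := dif_pos h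

/-- Generic simulation lemma: accessibility transfers backwards. -/
theorem acc_of_sim {α β : Type u} {r : α → α → Prop} {r' : β → β → Prop}
    {F : α → β} {S : α → Prop}
    (hF : ∀ t s, S s → r t s → S t ∧ r' (F t) (F s)) :
    ∀ {b : β}, Acc r' b → ∀ {s : α}, S s → F s = b → Acc r s := by
  intro b h'
  induction h' with
  | intro b hb ih =>
    intro s hs hFs
    constructor
    intro t ht
    obtain ⟨hSt, hrel⟩ := hF t s hs ht
    exact ih (F t) (hFs ▸ hrel) hSt rfl

/-- Generic simulation lemma: ranks compare. -/
theorem rank_le_of_sim {α β : Type u} {r : α → α → Prop} {r' : β → β → Prop}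
    {F : α → β} {S : α → Prop}
    (hF : ∀ t s, S s → r t s → S t ∧ r' (F t) (F s)) :
    ∀ (s : α) (h : Acc r s) (h' : Acc r' (F s)), S s → h.rank ≤ h'.rank := by
  intro s h
  induction h with
  | intro x hx ih =>
    intro h' hs
    rw [Acc.rank_eq]
    apply Ordinal.iSup_le
    rintro ⟨t, ht⟩
    obtain ⟨hSt, hrel⟩ := hF t x hs ht
    have h'' : Acc r' (F t) := h'.inv hrel
    exact (Order.succ_le_succ (ih t ht h'' hSt)).trans
      (Order.succ_le_of_lt (Acc.rank_lt_of_rel h' hrel))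

/-- Descent lemma: the rank is bounded by any strictly decreasing ordinal map. -/
theorem rank_le_descent {α : Type u} {r : α → α → Prop} (ρ : α → Ordinal.{u})
    (hρ : ∀ t s', r t s' → ρ t < ρ s') :
    ∀ (s : α) (h : Acc r s), h.rank ≤ ρ s := by
  intro s h
  induction h with
  | intro x hx ih =>
    rw [Acc.rank_eq]
    apply Ordinal.iSup_le
    rintro ⟨t, ht⟩
    exact (Order.succ_le_succ (ih t ht)).trans (Order.succ_le_of_lt (hρ t x ht))

section Generic

variable {C : Type u} [Preorder C]

/-- Nodes of the tree of bad sequences inside `U`. -/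
def memBad (U : Set C) : List C → Prop :=
  fun l => (∀ x ∈ l, x ∈ U) ∧ l.Pairwise (fun a b => ¬ a ≤ b)

/-- `o(U)` for a sub-quasi-order `U` of `C`. -/
noncomputable def oS (U : Set C) : Ordinal.{u} := nodeRank (memBad U) []

/-- In a wqo, every node of every `memBad` tree is accessible. -/
theorem acc_memBad (hC : ∀ f : ℕ → C, ∃ i j : ℕ, i < j ∧ f i ≤ f j)
    (U : Set C) (l : List C) : Acc (ExtRel (memBad U)) l := by
  have hbad : ∀ l : List C, Acc (ExtRel (fun l : List C => l.Pairwise (fun a b => ¬ a ≤ b))) l := by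
    apply acc_pairwise
    intro f
    obtain ⟨i, j, hij, hle⟩ := hC f
    exact ⟨i, j, hij, not_not.mpr hle⟩
  refine acc_of_sim (F := id) (S := fun _ => True) ?_ (hbad l) trivial rfl
  rintro t s - ⟨hP, a, rfl⟩
  exact ⟨trivial, ⟨hP.2, a, rfl⟩⟩

variable (hC : ∀ f : ℕ → C, ∃ i j : ℕ, i < j ∧ f i ≤ f j)

include hC

/-- Monotonicity of rank under inclusion of predicates (with membership). -/
theorem oS_mono {U V : Set C} (hUV : U ⊆ V) : oS U ≤ oS V := by
  rw [oS, oS, nodeRank_eq (acc_memBad hC U []), nodeRank_eq (acc_memBad hC V [])]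
  refine rank_le_of_sim (F := id) (S := fun _ => True) ?_ [] _ _ trivial
  rintro t s - ⟨⟨hmem, hpw⟩, a, rfl⟩
  exact ⟨trivial, ⟨⟨fun x hx => hUV (hmem x hx), hpw⟩, a, rfl⟩⟩

/-- The one-step shift: the rank of node `[a]` is the rank of the root for the residual. -/
theorem nodeRank_singleton (U : Set C) {a : C} (ha : a ∈ U) :
    nodeRank (memBad U) [a] = oS {b ∈ U | ¬ a ≤ b} := by
  set U' : Set C := {b ∈ U | ¬ a ≤ b} with hU'
  apply le_antisymm
  · rw [nodeRank_eq (acc_memBad hC U [a]), oS, nodeRank_eq (acc_memBad hC U' [])]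
    refine rank_le_of_sim (F := fun s => s.tail) (S := fun s => ∃ s', s = a :: s') ?_ [a]
      _ _ ⟨[], rfl⟩
    rintro t s ⟨s', rfl⟩ ⟨⟨hmem, hpw⟩, b, rfl⟩
    rw [List.cons_append] at hpw hmem
    have hpc := List.pairwise_cons.mp hpw
    refine ⟨⟨s' ++ [b], by rw [List.cons_append]⟩, ?_, b, rfl⟩
    constructor
    · intro x hx
      exact ⟨hmem x (List.mem_cons_of_mem a hx), hpc.1 x hx⟩
    · exact hpc.2
  · rw [oS, nodeRank_eq (acc_memBad hC U' []), nodeRank_eq (acc_memBad hC U [a])]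
    refine rank_le_of_sim (F := fun s => a :: s) (S := fun _ => True) ?_ [] _ _ trivial
    rintro t s - ⟨⟨hmem, hpw⟩, b, rfl⟩
    refine ⟨trivial, ⟨?_, ?_⟩, b, by rw [List.cons_append]⟩
    · intro x hx
      rcases List.mem_cons.mp hx with rfl | hx
      · exact ha
      · exact (hmem x hx).1
    · rw [List.pairwise_cons]
      exact ⟨fun x hx => (hmem x hx).2, hpw⟩


omit hC in
/-- A child has smaller rank. -/
theorem nodeRank_child_lt {A : Type u} {P : List A → Prop} {t s : List A}
    (hacc : Acc (ExtRel P) s) (h : ExtRel P t s) : nodeRank P t < nodeRank P s := by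
  rw [nodeRank_eq hacc, nodeRank_eq (hacc.inv h)]
  exact Acc.rank_lt_of_rel hacc h

omit hC in
/-- Rank of a node with no children is `0`. -/
theorem nodeRank_eq_zero {A : Type u} {P : List A → Prop} {l : List A}
    (h : ∀ t, ¬ ExtRel P t l) : nodeRank P l = 0 := by
  have hacc : Acc (ExtRel P) l := Acc.intro l (fun t ht => absurd ht (h t))
  rw [nodeRank_eq hacc, Acc.rank_eq]
  have : IsEmpty {b // ExtRel P b l} := ⟨fun b => h b.1 b.2⟩
  exact ciSup_of_empty _

theorem oS_residual_lt {U : Set C} {a : C} (ha : a ∈ U) :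
    oS {b ∈ U | ¬ a ≤ b} < oS U := by
  rw [← nodeRank_singleton hC U ha]
  exact nodeRank_child_lt (acc_memBad hC U [])
    ⟨⟨by simpa using ha, List.pairwise_singleton _ _⟩, a, by simp⟩

/-- Root rank bound from bounds on all the one-element nodes. -/
theorem oS_le_of_children {U : Set C} {c : Ordinal.{u}}
    (h : ∀ a ∈ U, nodeRank (memBad U) [a] < c) : oS U ≤ c := by
  rw [oS, nodeRank_eq (acc_memBad hC U []), Acc.rank_eq]
  apply Ordinal.iSup_le
  rintro ⟨b, hb⟩
  obtain ⟨hP, a, rfl⟩ := hb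
  have ha : a ∈ U := hP.1 a (by simp)
  rw [Order.succ_le_iff]
  exact (nodeRank_eq ((acc_memBad hC (U := U) []).inv ⟨hP, a, rfl⟩)).symm.trans_lt (h a ha)

/-- If `oS U` is a successor, some residual attains the predecessor. -/
theorem oS_attain {U : Set C} {γ₀ : Ordinal.{u}} (h : oS U = γ₀ + 1) :
    ∃ a ∈ U, oS {b ∈ U | ¬ a ≤ b} = γ₀ := by
  by_contra hcon
  push_neg at hcon
  have : oS U ≤ γ₀ := by
    apply oS_le_of_children hC
    intro a ha
    rw [nodeRank_singleton hC U ha]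
    have h1 : oS {b ∈ U | ¬ a ≤ b} < Order.succ γ₀ := by
      rw [← Ordinal.add_one_eq_succ, ← h]; exact oS_residual_lt hC ha
    rcases lt_or_eq_of_le (Order.lt_succ_iff.mp h1) with h2 | h2
    · exact h2
    · exact absurd h2 (hcon a ha)
  rw [h] at this
  simp at this

/-- Union bound: `o(U ∪ V) ≤ o(U) ♯ o(V)`. -/
theorem oS_union_le (U V : Set C) : oS (U ∪ V) ≤ oS U ♯ oS V := by
  classical
  rw [oS, nodeRank_eq (acc_memBad hC (U ∪ V) [])]
  have := rank_le_descent
    (fun l : List C => nodeRank (memBad U) (l.filter (fun x => decide (x ∈ U))) ♯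
      nodeRank (memBad V) (l.filter (fun x => decide (x ∉ U)))) ?_ [] (acc_memBad hC (U ∪ V) [])
  · simpa [oS] using this
  · rintro t s ⟨⟨hmem, hpw⟩, a, rfl⟩
    by_cases haU : a ∈ U
    · have hfil1 : (s ++ [a]).filter (fun x => decide (x ∈ U)) =
          s.filter (fun x => decide (x ∈ U)) ++ [a] := by
        rw [List.filter_append]; simp [haU]
      have hfil2 : (s ++ [a]).filter (fun x => decide (x ∉ U)) =
          s.filter (fun x => decide (x ∉ U)) := by
        rw [List.filter_append]; simp [haU]
      rw [hfil1, hfil2]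
      apply nadd_lt_nadd_right
      apply nodeRank_child_lt (acc_memBad hC U _)
      refine ⟨⟨?_, ?_⟩, a, rfl⟩
      · intro x hx
        rcases List.mem_append.mp hx with hx | hx
        · have := List.of_mem_filter hx
          simpa using this
        · simp at hx; subst hx; exact haU
      · refine List.Pairwise.sublist ?_ hpw
        exact (List.filter_sublist (l := s)).append_right [a]
    · have haV : a ∈ V := (hmem a (by simp)).resolve_left haU
      have hfil1 : (s ++ [a]).filter (fun x => decide (x ∈ U)) =
          s.filter (fun x => decide (x ∈ U)) := by
        rw [List.filter_append]; simp [haU]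
      have hfil2 : (s ++ [a]).filter (fun x => decide (x ∉ U)) =
          s.filter (fun x => decide (x ∉ U)) ++ [a] := by
        rw [List.filter_append]; simp [haU]
      rw [hfil1, hfil2]
      apply nadd_lt_nadd_left
      apply nodeRank_child_lt (acc_memBad hC V _)
      refine ⟨⟨?_, ?_⟩, a, rfl⟩
      · intro x hx
        rcases List.mem_append.mp hx with hx | hx
        · have h1 := List.of_mem_filter hx
          have h2 := List.mem_of_mem_filter hx
          simp only [decide_not, Bool.not_eq_true', decide_eq_false_iff_not] at h1
          exact (hmem x (List.mem_append.mpr (Or.inl h2))).resolve_left h1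
        · simp at hx; subst hx; exact haV
      · refine List.Pairwise.sublist ?_ hpw
        exact (List.filter_sublist (l := s)).append_right [a]

end Generic



/-! ### The upper bound -/

section UB

variable {A : Type u} [Preorder A]

/-- Finite subsets drawn from `X`. -/
def pfFam (X : Set A) : Set (Pf A) := {T : Pf A | T.1 ⊆ X}

theorem oS_empty {C : Type u} [Preorder C] : oS (∅ : Set C) = 0 := by
  rw [oS]
  apply nodeRank_eq_zero
  rintro t ⟨⟨hmem, -⟩, a, rfl⟩
  exact hmem a (by simp)

theorem main_upper (hA : IsWqo A) :
    ∀ (γ : Ordinal.{u}) (X : Set A), oS X = γ → oS (pfFam X) ≤ 2 ^ γ := by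
  classical
  have hPf : IsWqo (Pf A) := isWqo_pf hA
  intro γ
  induction γ using Ordinal.induction with
  | h γ IH =>
    intro X hX
    rcases zero_or_succ_or_isSuccLimit γ with rfl | ⟨γ₀, hγ₀⟩ | hlim
    · -- γ = 0 : X is empty
      have hXempty : ∀ a, a ∉ X := by
        intro a ha
        have := oS_residual_lt hA ha
        rw [hX] at this
        exact absurd this not_lt_zero
      rw [opow_zero]
      apply oS_le_of_children hPf
      intro T hT
      have h0 : nodeRank (memBad (pfFam X)) [T] = 0 := by
        apply nodeRank_eq_zero
        rintro t ⟨⟨hmem, hpw⟩, T', rfl⟩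
        have hTT' : T ≤ T' := fun a ha' => absurd (hT ha') (hXempty a)
        have hcross := (List.pairwise_append.mp hpw).2.2 T (by simp) T' (by simp)
        exact hcross hTT'
      rw [h0]
      exact zero_lt_one
    · -- successor case
      subst hγ₀
      rw [← Ordinal.add_one_eq_succ] at hX ⊢
      obtain ⟨x, hxX, hres⟩ := oS_attain hA hX
      set D : Set A := {b ∈ X | ¬ x ≤ b} with hD
      have hIH : oS (pfFam D) ≤ 2 ^ γ₀ := IH γ₀ (Order.lt_succ γ₀) D hres
      -- everything above x in X is equivalent to x
      have hveq : ∀ v ∈ X, x ≤ v → v ≤ x := by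
        intro v hv hxv
        by_contra hvx
        have hxin : x ∈ {b ∈ X | ¬ v ≤ b} := ⟨hxX, hvx⟩
        have h1 := oS_residual_lt hA hxin
        have hseteq : {b ∈ {b ∈ X | ¬ v ≤ b} | ¬ x ≤ b} = D := by
          ext b
          constructor
          · rintro ⟨⟨hbX, -⟩, hxb⟩; exact ⟨hbX, hxb⟩
          · rintro ⟨hbX, hxb⟩
            exact ⟨⟨hbX, fun hvb => hxb (le_trans hxv hvb)⟩, hxb⟩
        rw [hseteq, hres] at h1
        have h2 := oS_residual_lt hA hv
        rw [hX] at h2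
        have h3 : oS {b ∈ X | ¬ v ≤ b} ≤ γ₀ := by
          rw [Ordinal.add_one_eq_succ] at h2
          exact Order.lt_succ_iff.mp h2
        exact absurd (h1.trans_le h3) (lt_irrefl γ₀)
      -- the projection to the D-part
      set Dpart : Pf A → Pf A :=
        fun T => ⟨{a ∈ T.1 | ¬ x ≤ a}, T.2.subset (Set.sep_subset _ _)⟩ with hDpart
      set flag : Pf A → Prop := fun T => ∃ a ∈ T.1, x ≤ a with hflag
      have hDmem : ∀ T : Pf A, T.1 ⊆ X → Dpart T ∈ pfFam D := by
        rintro T hTX a ⟨haT, hxa⟩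
        exact ⟨hTX haT, hxa⟩
      -- key badness transfer lemmas
      have hbeta1 : ∀ T' T'' : Pf A, T'.1 ⊆ X → flag T'' → ¬ T' ≤ T'' →
          ¬ Dpart T' ≤ Dpart T'' := by
        intro T' T'' hT'X hf'' hne hDle
        apply hne
        intro a ha
        by_cases hxa : x ≤ a
        · obtain ⟨b, hb, hxb⟩ := hf''
          exact ⟨b, hb, le_trans (hveq a (hT'X ha) hxa) hxb⟩
        · obtain ⟨b, hb, hab⟩ := hDle a ⟨ha, hxa⟩
          exact ⟨b, hb.1, hab⟩
      have hbeta0 : ∀ T' T'' : Pf A, ¬ flag T' → ¬ T' ≤ T'' →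
          ¬ Dpart T' ≤ Dpart T'' := by
        intro T' T'' hf' hne hDle
        apply hne
        intro a ha
        have hxa : ¬ x ≤ a := fun h => hf' ⟨a, ha, h⟩
        obtain ⟨b, hb, hab⟩ := hDle a ⟨ha, hxa⟩
        exact ⟨b, hb.1, hab⟩
      -- the descent map
      rw [oS, nodeRank_eq (acc_memBad hPf (pfFam X) [])]
      have hdesc := rank_le_descent
        (fun l : List (Pf A) =>
          nodeRank (memBad (pfFam D)) ((l.filter (fun T => decide (¬ flag T))).map Dpart) ♯
          nodeRank (memBad (pfFam D)) ((l.filter (fun T => decide (flag T))).map Dpart))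
        ?_ [] (acc_memBad hPf (pfFam X) [])
      · refine hdesc.trans ?_
        simp only [List.filter_nil, List.map_nil]
        refine (nadd_le_nadd hIH hIH).trans ?_
        exact two_opow_nadd_self γ₀
      · rintro t s ⟨⟨hmem, hpw⟩, T, rfl⟩
        have hTX : T.1 ⊆ X := hmem T (by simp)
        have hmemfil : ∀ (p : Pf A → Bool) (T' : Pf A),
            T' ∈ (s ++ [T]).filter p → T'.1 ⊆ X :=
          fun p T' hT' => hmem T' (List.mem_of_mem_filter hT')
        -- badness of the projected filtered list, for either filter
        have hbadproj : ∀ p : Pf A → Bool,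
            (∀ T' T'' : Pf A, T' ∈ (s ++ [T]).filter p → T'' ∈ (s ++ [T]).filter p →
              ¬ T' ≤ T'' → ¬ Dpart T' ≤ Dpart T'') →
            ((( s ++ [T]).filter p).map Dpart).Pairwise (fun a b => ¬ a ≤ b) := by
          intro p hp
          rw [List.pairwise_map]
          have hsub : ((s ++ [T]).filter p).Pairwise (fun a b => ¬ a ≤ b) :=
            hpw.sublist List.filter_sublist
          exact List.Pairwise.imp_of_mem (fun {a b} hab hbb h => hp a b hab hbb h) hsub
        by_cases hfT : flag T
        · have hfil1 : (s ++ [T]).filter (fun T' => decide (¬ flag T')) =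
              s.filter (fun T' => decide (¬ flag T')) := by
            rw [List.filter_append]; simp [hfT]
          have hfil2 : (s ++ [T]).filter (fun T' => decide (flag T')) =
              s.filter (fun T' => decide (flag T')) ++ [T] := by
            rw [List.filter_append]; simp [hfT]
          rw [hfil1, hfil2, List.map_append]
          apply nadd_lt_nadd_left
          apply nodeRank_child_lt (acc_memBad hPf (pfFam D) _)
          refine ⟨⟨?_, ?_⟩, Dpart T, by simp⟩
          · intro S hS
            rw [← List.map_append, ← hfil2] at hS
            obtain ⟨T', hT', rfl⟩ := List.mem_map.mp hS
            exact hDmem T' (hmemfil _ T' hT')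
          · rw [← List.map_append, ← hfil2]
            apply hbadproj
            intro T' T'' hT' hT'' hne
            have hf'' : flag T'' := by
              have := List.of_mem_filter hT''
              simpa using this
            exact hbeta1 T' T'' (hmemfil _ T' hT') hf'' hne
        · have hfil1 : (s ++ [T]).filter (fun T' => decide (¬ flag T')) =
              s.filter (fun T' => decide (¬ flag T')) ++ [T] := by
            rw [List.filter_append]; simp [hfT]
          have hfil2 : (s ++ [T]).filter (fun T' => decide (flag T')) =
              s.filter (fun T' => decide (flag T')) := by
            rw [List.filter_append]; simp [hfT]
          rw [hfil1, hfil2, List.map_append]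
          apply nadd_lt_nadd_right
          apply nodeRank_child_lt (acc_memBad hPf (pfFam D) _)
          refine ⟨⟨?_, ?_⟩, Dpart T, by simp⟩
          · intro S hS
            rw [← List.map_append, ← hfil1] at hS
            obtain ⟨T', hT', rfl⟩ := List.mem_map.mp hS
            exact hDmem T' (hmemfil _ T' hT')
          · rw [← List.map_append, ← hfil1]
            apply hbadproj
            intro T' T'' hT' hT'' hne
            have hf' : ¬ flag T' := by
              have := List.of_mem_filter hT'
              simpa using this
            exact hbeta0 T' T'' hf' hne
    · -- limit case
      apply oS_le_of_children hPf
      intro T hT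
      rw [nodeRank_singleton hPf (pfFam X) hT]
      -- the union family over the elements of T
      have hfam : ∀ ts : List A, (∀ t ∈ ts, t ∈ X) →
          oS {T' : Pf A | ∃ t ∈ ts, T'.1 ⊆ {b ∈ X | ¬ t ≤ b}} < 2 ^ γ := by
        intro ts
        induction ts with
        | nil =>
          intro _
          have h0 : {T' : Pf A | ∃ t ∈ ([] : List A), T'.1 ⊆ {b ∈ X | ¬ t ≤ b}} = ∅ := by
            ext T'; simp
          rw [h0, oS_empty]
          exact opow_pos γ two_pos
        | cons t ts ihts =>
          intro hts
          have htX : t ∈ X := hts t (by simp)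
          have hsplit : {T' : Pf A | ∃ t' ∈ t :: ts, T'.1 ⊆ {b ∈ X | ¬ t' ≤ b}} =
              pfFam {b ∈ X | ¬ t ≤ b} ∪ {T' : Pf A | ∃ t' ∈ ts, T'.1 ⊆ {b ∈ X | ¬ t' ≤ b}} := by
            ext T'
            simp only [Set.mem_setOf_eq, List.mem_cons, Set.mem_union]
            constructor
            · rintro ⟨t', rfl | ht', hsub⟩
              · exact Or.inl hsub
              · exact Or.inr ⟨t', ht', hsub⟩
            · rintro (hsub | ⟨t', ht', hsub⟩)
              · exact ⟨t, Or.inl rfl, hsub⟩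
              · exact ⟨t', Or.inr ht', hsub⟩
          rw [hsplit]
          refine (oS_union_le hPf _ _).trans_lt ?_
          have hβ : oS {b ∈ X | ¬ t ≤ b} < γ := by
            rw [← hX]; exact oS_residual_lt hA htX
          have h1 : oS (pfFam {b ∈ X | ¬ t ≤ b}) < 2 ^ γ := by
            refine (IH _ hβ _ rfl).trans_lt ?_
            exact (opow_lt_opow_iff_right one_lt_two).mpr hβ
          have h2 := ihts (fun t' ht' => hts t' (by simp [ht']))
          exact nadd_lt_two_opow_limit hlim h1 h2
      -- bound the residual by the union family
      rcases Set.eq_empty_or_nonempty T.1 with hTe | hTne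
      · have hres0 : {T' ∈ pfFam X | ¬ T ≤ T'} = ∅ := by
          ext T'
          simp only [Set.mem_setOf_eq, Set.mem_empty_iff_false, iff_false, not_and, not_not]
          rintro -
          intro a ha
          rw [hTe] at ha
          exact absurd ha (Set.notMem_empty a)
        rw [hres0, oS_empty]
        exact opow_pos γ two_pos
      · set ts := T.2.toFinset.toList with hts
        have htsmem : ∀ t, t ∈ ts ↔ t ∈ T.1 := by
          intro t
          rw [hts, Finset.mem_toList, Set.Finite.mem_toFinset]
        have hsub : {T' ∈ pfFam X | ¬ T ≤ T'} ⊆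
            {T' : Pf A | ∃ t ∈ ts, T'.1 ⊆ {b ∈ X | ¬ t ≤ b}} := by
          rintro T' ⟨hT'X, hnle⟩
          have hnle' : ¬ ∀ a ∈ T.1, ∃ b ∈ T'.1, a ≤ b := hnle
          push_neg at hnle'
          obtain ⟨a, haT, hnd⟩ := hnle'
          exact ⟨a, (htsmem a).mpr haT, fun b hb => ⟨hT'X hb, hnd b hb⟩⟩
        refine ((oS_mono hPf hsub).trans_lt (hfam ts ?_))
        intro t ht
        exact hT ((htsmem t).mp ht)

theorem upper_bound (hA : IsWqo A) : mot (Pf A) ≤ 2 ^ mot A := by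
  have h1 : mot A = oS (Set.univ : Set A) := by
    rw [mot, oS, treeRank_eq_nodeRank]
    congr 1
    funext l
    apply propext
    exact ⟨fun h => ⟨fun x _ => Set.mem_univ x, h⟩, fun h => h.2⟩
  have h2 : mot (Pf A) = oS (pfFam (Set.univ : Set A)) := by
    rw [mot, oS, treeRank_eq_nodeRank]
    congr 1
    funext l
    apply propext
    exact ⟨fun h => ⟨fun x _ => fun a _ => Set.mem_univ a, h⟩, fun h => h.2⟩
  rw [h1, h2]
  exact main_upper hA (oS Set.univ) Set.univ rfl

end UB

end PfMot

/-- Theorem 3.2: for every wqo `A`, `1 + o(A) ≤ o(Pf(A)) ≤ 2 ^ o(A)`. -/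
theorem pf_mot_bounds (A : Type u) [Preorder A] (hA : IsWqo A) :
    1 + mot A ≤ mot (Pf A) ∧ mot (Pf A) ≤ 2 ^ mot A :=
  ⟨lower_bound hA, PfMot.upper_bound hA⟩
end

section
/- For every well-quasi-order A: 1 + h(A) ≤ h(Pf(A)); moreover, if h(A) is a limit ordinal then h(Pf(A)) ≤ 2^{h(A)}, and if h(A) is a successor ordinal then there exists m < ω such that h(Pf(A)) ≤ 2^{h(A)} · m (ordinal exponentiation and ordinal product). -/
open Ordinal

universe u

namespace PfHeight

variable {A : Type u} [Preorder A]

/-- There is no sequence with no increasing pair. -/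
lemma no_bad (hA : IsWqo A) (g : ℕ → A) (h : ∀ i j : ℕ, i < j → ¬ g i ≤ g j) : False := by
  obtain ⟨i, j, hij, hle⟩ := hA g
  exact h i j hij hle

/-- extraction of a descending sequence from non-well-foundedness -/
lemma descending_of_not_wf {α : Type*} {r : α → α → Prop} (h : ¬ WellFounded r) :
    ∃ f : ℕ → α, ∀ n, r (f (n + 1)) (f n) := by
  have h0 : ∃ a, ¬ Acc r a := by
    by_contra hc
    push_neg at hc
    exact h ⟨hc⟩
  have key : ∀ a, ¬ Acc r a → ∃ b, r b a ∧ ¬ Acc r b := by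
    intro a ha
    by_contra hc
    push_neg at hc
    exact ha (Acc.intro a fun b hb => hc b hb)
  obtain ⟨a0, ha0⟩ := h0
  let F : {a // ¬ Acc r a} → {a // ¬ Acc r a} := fun p =>
    ⟨(key p.1 p.2).choose, (key p.1 p.2).choose_spec.2⟩
  let f : ℕ → {a // ¬ Acc r a} := fun n => F^[n] ⟨a0, ha0⟩
  refine ⟨fun n => (f n).1, fun n => ?_⟩
  have h1 : f (n + 1) = F (f n) := Function.iterate_succ_apply' F n _
  show r (f (n+1)).1 (f n).1
  rw [h1]
  exact (key (f n).1 (f n).2).choose_spec.1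

lemma wf_lt (hA : IsWqo A) : WellFounded ((· < ·) : A → A → Prop) := by
  by_contra h
  obtain ⟨f, hf⟩ := descending_of_not_wf h
  have hchain : ∀ i j : ℕ, i < j → f j < f i := by
    intro i j hij
    induction j with
    | zero => omega
    | succ k ih =>
      rcases Nat.lt_succ_iff_lt_or_eq.1 hij with h' | h'
      · exact (hf k).trans (ih h')
      · subst h'; exact hf i
  exact no_bad hA f (fun i j hij hle => (lt_iff_le_not_ge.1 (hchain i j hij)).2 hle)

/-- downward closure -/
def dcl (s : Set A) : Set A := {x | ∃ a ∈ s, x ≤ a}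

lemma subset_dcl {s : Set A} : s ⊆ dcl s := fun x hx => ⟨x, hx, le_refl x⟩

lemma dcl_mono {s t : Set A} (h : s ⊆ t) : dcl s ⊆ dcl t := by
  rintro x ⟨a, ha, hle⟩; exact ⟨a, h ha, hle⟩

lemma mem_dcl_of_le {s : Set A} {x y : A} (hxy : x ≤ y) (hy : y ∈ dcl s) : x ∈ dcl s := by
  obtain ⟨a, ha, hle⟩ := hy; exact ⟨a, ha, hxy.trans hle⟩

lemma dcl_subset {s D : Set A} (hD : ∀ x y, x ≤ y → y ∈ D → x ∈ D) (h : s ⊆ D) :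
    dcl s ⊆ D := by
  rintro x ⟨a, ha, hle⟩; exact hD x a hle (h ha)

/-- finitely generated downsets -/
def IsFG (D : Set A) : Prop := ∃ s : Set A, s.Finite ∧ D = dcl s

lemma IsFG.downclosed {D : Set A} (h : IsFG D) : ∀ x y, x ≤ y → y ∈ D → x ∈ D := by
  obtain ⟨s, _, rfl⟩ := h
  exact fun x y hxy hy => mem_dcl_of_le hxy hy

lemma isFG_dcl {s : Set A} (hs : s.Finite) : IsFG (dcl s) := ⟨s, hs, rfl⟩

lemma isFG_empty : IsFG (∅ : Set A) := by
  refine ⟨∅, Set.finite_empty, ?_⟩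
  ext x; simp [dcl]

/-- the strict order on finitely generated downsets -/
def DRel (D E : Set A) : Prop := IsFG D ∧ D ⊂ E

lemma wf_DRel (hA : IsWqo A) : WellFounded (DRel (A := A)) := by
  by_contra h
  obtain ⟨f, hf⟩ := descending_of_not_wf h
  set g : ℕ → Set A := fun n => f (n + 1) with hg
  have gFG : ∀ n, IsFG (g n) := fun n => (hf n).1
  have gss : ∀ n, g (n + 1) ⊂ g n := fun n => (hf (n + 1)).2
  have hmono : ∀ i j : ℕ, i ≤ j → g j ⊆ g i := by
    intro i j hij
    induction j with
    | zero => simp_all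
    | succ k ih =>
      rcases Nat.le_succ_iff_eq_or_le.mp hij with h' | h'
      · subst h'; rfl
      · exact ((gss k).1).trans (ih h')
  have hwit : ∀ n, ∃ b, b ∈ g n ∧ b ∉ g (n + 1) := by
    intro n
    obtain ⟨b, hb1, hb2⟩ := Set.exists_of_ssubset (gss n)
    exact ⟨b, hb1, hb2⟩
  choose b hb1 hb2 using hwit
  refine no_bad hA b (fun i j hij hle => ?_)
  have hbj : b j ∈ g (i + 1) := hmono (i+1) j hij (hb1 j)
  exact hb2 i ((gFG (i + 1)).downclosed _ _ hle hbj)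

/-- upward cone -/
def ucone (b : A) : Set A := {y | b ≤ y}

/-- the auxiliary well-founded relation on subsets used for the main induction -/
def Prec (X' X : Set A) : Prop := ∃ b ∈ X, X' ⊆ X \ ucone b

lemma wf_Prec (hA : IsWqo A) : WellFounded (Prec (A := A)) := by
  by_contra h
  obtain ⟨f, hf⟩ := descending_of_not_wf h
  choose b hb1 hb2 using hf
  have hmono : ∀ i j : ℕ, i ≤ j → f j ⊆ f i := by
    intro i j hij
    induction j with
    | zero => simp_all
    | succ k ih =>
      rcases Nat.le_succ_iff_eq_or_le.mp hij with h' | h'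
      · subst h'; rfl
      · exact ((hb2 k).trans Set.diff_subset).trans (ih h')
  refine no_bad hA b (fun i j hij hle => ?_)
  have : b j ∈ f (i + 1) := hmono (i+1) j hij (hb1 j)
  exact (hb2 i this).2 hle

variable (hA : IsWqo A)

/-- rank of an element w.r.t. `<` -/
noncomputable def rnk (x : A) : Ordinal.{u} := ((wf_lt hA).apply x).rank

lemma rnk_lt_of_lt {x y : A} (h : x < y) : rnk hA x < rnk hA y := by
  have := Acc.rank_lt_of_rel ((wf_lt hA).apply y) h
  simpa [rnk, Subsingleton.elim (((wf_lt hA).apply y).inv h) ((wf_lt hA).apply x)] using this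

lemma rnk_eq (x : A) :
    rnk hA x = ⨆ z : {z : A // z < x}, Order.succ (rnk hA z.1) := by
  rw [rnk, Acc.rank_eq]
  rfl

lemma rnk_mono {x y : A} (h : x ≤ y) : rnk hA x ≤ rnk hA y := by
  rw [rnk_eq hA x]
  refine Ordinal.iSup_le fun z => ?_
  have : z.1 < y := lt_of_lt_of_le z.2 h
  exact Order.succ_le_of_lt (rnk_lt_of_lt hA this)

lemma le_of_le_rnk_eq {x y : A} (h : x ≤ y) (hr : rnk hA x = rnk hA y) : y ≤ x := by
  by_contra hc
  exact (rnk_lt_of_lt hA (lt_of_le_not_ge h hc)).ne hr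

/-- rank of a finitely generated downset in the poset of f.g. downsets -/
noncomputable def RK (D : Set A) : Ordinal.{u} := ((wf_DRel hA).apply D).rank

lemma RK_lt_of_rel {D E : Set A} (h : DRel D E) : RK hA D < RK hA E := by
  have := Acc.rank_lt_of_rel ((wf_DRel hA).apply E) h
  simpa [RK, Subsingleton.elim (((wf_DRel hA).apply E).inv h) ((wf_DRel hA).apply D)] using this

lemma RK_le_of {E : Set A} {c : Ordinal.{u}} (h : ∀ D, DRel D E → RK hA D < c) :
    RK hA E ≤ c := by
  rw [RK, Acc.rank_eq]
  refine Ordinal.iSup_le fun D => ?_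
  rw [Order.succ_le_iff]
  have := h D.1 D.2
  rwa [RK, congrArg Acc.rank (Subsingleton.elim ((wf_DRel hA).apply D.1)
    (((wf_DRel hA).apply E).inv D.2))] at this

/-- intrinsic height of a subset -/
noncomputable def hgt (X : Set A) : Ordinal.{u} := ⨆ x : X, Order.succ (rnk hA x.1)

lemma succ_rnk_le_hgt {X : Set A} {x : A} (hx : x ∈ X) :
    Order.succ (rnk hA x) ≤ hgt hA X := Ordinal.le_iSup _ (⟨x, hx⟩ : X)

lemma hgt_le {X : Set A} {c : Ordinal.{u}} (h : ∀ x ∈ X, Order.succ (rnk hA x) ≤ c) :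
    hgt hA X ≤ c := Ordinal.iSup_le fun x => h x.1 x.2

/-- the key quantity: supremum of successors of ranks of f.g. downsets inside `X` -/
noncomputable def FF (X : Set A) : Ordinal.{u} :=
  ⨆ D : {D : Set A // IsFG D ∧ D ⊆ X}, Order.succ (RK hA D.1)

lemma succ_RK_le_FF {X D : Set A} (h1 : IsFG D) (h2 : D ⊆ X) :
    Order.succ (RK hA D) ≤ FF hA X := Ordinal.le_iSup _ (⟨D, h1, h2⟩ : {D : Set A // IsFG D ∧ D ⊆ X})

lemma RK_lt_FF {X D : Set A} (h1 : IsFG D) (h2 : D ⊆ X) : RK hA D < FF hA X :=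
  (Order.lt_succ _).trans_le (succ_RK_le_FF hA h1 h2)

lemma FF_le {X : Set A} {c : Ordinal.{u}} (h : ∀ D, IsFG D → D ⊆ X → RK hA D < c) :
    FF hA X ≤ c := by
  refine Ordinal.iSup_le fun D => ?_
  rw [Order.succ_le_iff]
  exact h D.1 D.2.1 D.2.2

lemma FF_pos (X : Set A) : 0 < FF hA X :=
  lt_of_lt_of_le (Order.bot_lt_succ _) (succ_RK_le_FF hA isFG_empty (Set.empty_subset X))

/-! ### ordinal arithmetic helpers -/

lemma two_lt_omega0 : (2 : Ordinal.{u}) < Ordinal.omega0.{u} := by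
  simpa using Ordinal.nat_lt_omega0 2

lemma one_lt_two' : (1 : Ordinal.{u}) < 2 := by
  norm_num

lemma two_opow_omega0 : (2 : Ordinal.{u}) ^ Ordinal.omega0.{u} = Ordinal.omega0.{u} :=
  Ordinal.opow_omega0 one_lt_two' two_lt_omega0

lemma two_opow_pos (b : Ordinal.{u}) : 0 < (2 : Ordinal.{u}) ^ b :=
  Ordinal.opow_pos b (by norm_num)

lemma add_omega0_le_of_lt_limit {a l : Ordinal.{u}} (hl : Order.IsSuccLimit l) (h : a < l) :
    a + Ordinal.omega0 ≤ l := by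
  have claim : ∀ n : ℕ, a + (n : Ordinal) < l := by
    intro n
    induction n with
    | zero => simpa using h
    | succ k ih =>
      have : a + ((k+1 : ℕ) : Ordinal) = Order.succ (a + k) := by
        push_cast
        rw [← add_assoc]
        exact (Ordinal.add_one_eq_succ _)
      rw [this]
      exact hl.succ_lt ih
  rw [Ordinal.add_le_iff_of_isSuccLimit Ordinal.isSuccLimit_omega0]
  intro b hb
  obtain ⟨n, rfl⟩ := Ordinal.lt_omega0.1 hb
  exact (claim n).le

lemma exists_nat_mul_of_lt_mul_omega0 {x c : Ordinal.{u}} (hc : 0 < c)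
    (h : x < c * Ordinal.omega0) : ∃ m : ℕ, x ≤ c * m := by
  obtain ⟨b, hb, hxb⟩ := (Ordinal.lt_mul_iff_of_isSuccLimit Ordinal.isSuccLimit_omega0).1 h
  obtain ⟨m, rfl⟩ := Ordinal.lt_omega0.1 hb
  exact ⟨m, hxb.le⟩

lemma two_opow_add_omega0 (b : Ordinal.{u}) :
    (2 : Ordinal.{u}) ^ (b + Ordinal.omega0) = 2 ^ b * Ordinal.omega0 := by
  rw [Ordinal.opow_add, two_opow_omega0]

/-- finite sup of ordinals strictly below a positive ordinal is strictly below it -/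
lemma finite_iSup_lt {ι : Type u} [Finite ι] (f : ι → Ordinal.{u}) {l : Ordinal.{u}}
    (hl : 0 < l) (h : ∀ i, f i < l) : (⨆ i, f i) < l := by
  cases isEmpty_or_nonempty ι with
  | inl hemp => simpa [ciSup_of_empty] using hl
  | inr hne =>
    obtain ⟨i0, hi0⟩ := Finite.exists_max f
    exact lt_of_le_of_lt (Ordinal.iSup_le hi0) (h i0)

/-! ### finitely many equivalence classes in a layer -/

lemma tops_cover (X : Set A) (b : Ordinal.{u}) :
    ∃ L : List A, (∀ c ∈ L, c ∈ X ∧ rnk hA c = b) ∧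
      (∀ x ∈ X, rnk hA x = b → ∃ c ∈ L, x ≤ c ∧ c ≤ x) := by
  by_contra hno
  push_neg at hno
  have step : ∀ L : List A, (∀ c ∈ L, c ∈ X ∧ rnk hA c = b) →
      ∃ x, (x ∈ X ∧ rnk hA x = b) ∧ ∀ c ∈ L, ¬ (x ≤ c ∧ c ≤ x) := by
    intro L hL
    obtain ⟨x, hx1, hx2, hx3⟩ := hno L hL
    exact ⟨x, ⟨hx1, hx2⟩, fun c hc hcon => hx3 c hc hcon.1 hcon.2⟩
  let F : {L : List A // ∀ c ∈ L, c ∈ X ∧ rnk hA c = b} →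
      {L : List A // ∀ c ∈ L, c ∈ X ∧ rnk hA c = b} := fun p =>
    ⟨(step p.1 p.2).choose :: p.1, by
      intro c hc
      rcases List.mem_cons.1 hc with h | h
      · rw [h]; exact (step p.1 p.2).choose_spec.1
      · exact p.2 c h⟩
  let Lf : ℕ → {L : List A // ∀ c ∈ L, c ∈ X ∧ rnk hA c = b} :=
    fun n => F^[n] ⟨[], by simp⟩
  have hLf : ∀ n, Lf (n + 1) = F (Lf n) := fun n => Function.iterate_succ_apply' F n _
  let g : ℕ → A := fun n => (step (Lf n).1 (Lf n).2).choose
  have hgmem : ∀ m n, m < n → g m ∈ (Lf n).1 := by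
    intro m n
    induction n with
    | zero => omega
    | succ k ih =>
      intro hmk
      have h1 : (Lf (k+1)).1 = g k :: (Lf k).1 := by rw [hLf k]
      rcases Nat.lt_succ_iff_lt_or_eq.1 hmk with h | h
      · rw [h1]; exact List.mem_cons_of_mem _ (ih h)
      · rw [h, h1]; exact List.mem_cons_self
  refine no_bad hA g (fun i j hij hle => ?_)
  have hgi := (step (Lf i).1 (Lf i).2).choose_spec
  have hgj := (step (Lf j).1 (Lf j).2).choose_spec
  have hback : g j ≤ g i :=
    le_of_le_rnk_eq hA hle (by rw [hgi.1.2, hgj.1.2])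
  exact hgj.2 (g i) (hgmem i j hij) ⟨hback, hle⟩

/-! ### the master bound -/

def Goal (X : Set A) : Prop :=
  (Order.IsSuccLimit (hgt hA X) → FF hA X ≤ 2 ^ hgt hA X) ∧
  (∀ b : Ordinal.{u}, hgt hA X = Order.succ b → ∃ m : ℕ, FF hA X ≤ 2 ^ b * m) ∧
  (hgt hA X = 0 → FF hA X ≤ 1)

lemma Goal.ff_lt {X : Set A} (h : Goal hA X) :
    FF hA X < 2 ^ (hgt hA X + Ordinal.omega0) := by
  rcases Ordinal.zero_or_succ_or_isSuccLimit (hgt hA X) with h0 | ⟨b, hb⟩ | hlim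
  · refine lt_of_le_of_lt (h.2.2 h0) ?_
    rw [h0, zero_add, two_opow_omega0]
    exact Ordinal.one_lt_omega0
  · obtain ⟨m, hm⟩ := h.2.1 b hb.symm
    refine lt_of_le_of_lt hm ?_
    have h1 : (2 : Ordinal.{u}) ^ b * m < 2 ^ b * Ordinal.omega0 :=
      mul_lt_mul_of_pos_left (Ordinal.nat_lt_omega0 m) (two_opow_pos b)
    have h2 : (2 : Ordinal.{u}) ^ b * Ordinal.omega0 = 2 ^ (hgt hA X + Ordinal.omega0) := by
      rw [← two_opow_add_omega0, ← hb]
      congr 1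
      rw [← Ordinal.add_one_eq_succ, add_assoc, one_add_omega0]
    rw [← h2]
    exact h1
  · refine lt_of_le_of_lt (h.1 hlim) ?_
    rw [Ordinal.opow_lt_opow_iff_right one_lt_two']
    simpa using (add_lt_add_right Ordinal.omega0_pos (hgt hA X))

lemma goal_all : ∀ X : Set A, Goal hA X := by
  intro X0
  induction X0 using (wf_Prec hA).induction with
  | _ X IH => ?_
  have hrnk_le : ∀ {b : Ordinal.{u}}, hgt hA X = Order.succ b → ∀ x ∈ X, rnk hA x ≤ b := by
    intro b hb x hx
    have := succ_rnk_le_hgt hA hx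
    rw [hb, Order.succ_le_succ_iff] at this
    exact this
  refine ⟨?_, ?_, ?_⟩
  · -- limit case
    intro hlim
    refine FF_le hA fun D hFG hDX => ?_
    obtain ⟨T, hTfin, rfl⟩ := hFG
    have hTX : T ⊆ X := subset_dcl.trans hDX
    haveI : Finite ↥T := hTfin.to_subtype
    have key : RK hA (dcl T) ≤ ⨆ t : T, FF hA (dcl T \ ucone t.1) := by
      refine RK_le_of hA fun D' hrel => ?_
      have hnsub : ¬ dcl T ⊆ D' := (Set.ssubset_def.mp hrel.2).2
      have hTsub : ¬ T ⊆ D' := fun hsub => hnsub (dcl_subset hrel.1.downclosed hsub)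
      obtain ⟨t, htT, htD'⟩ := Set.not_subset.1 hTsub
      have hD'sub : D' ⊆ dcl T \ ucone t := by
        intro x hx
        exact ⟨(Set.ssubset_def.mp hrel.2).1 hx,
          fun hcone => htD' (hrel.1.downclosed t x hcone hx)⟩
      exact lt_of_lt_of_le (RK_lt_FF hA hrel.1 hD'sub)
        (Ordinal.le_iSup _ (⟨t, htT⟩ : T))
    have hbound : ∀ t : T, FF hA (dcl T \ ucone t.1) < 2 ^ hgt hA X := by
      intro t
      have hPrec : Prec (dcl T \ ucone t.1) X :=
        ⟨t.1, hTX t.2, Set.diff_subset_diff_left hDX⟩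
      have hgoal := IH _ hPrec
      have hflt := hgoal.ff_lt hA
      have hT : hgt hA (dcl T \ ucone t.1) ≤ ⨆ t' : T, Order.succ (rnk hA t'.1) := by
        refine hgt_le hA fun x hx => ?_
        obtain ⟨t', ht', hle⟩ := hx.1
        exact le_trans (Order.succ_le_succ (rnk_mono hA hle))
          (Ordinal.le_iSup _ (⟨t', ht'⟩ : T))
      have hlT : (⨆ t' : T, Order.succ (rnk hA t'.1)) < hgt hA X := by
        refine finite_iSup_lt _ hlim.pos fun t' => ?_
        have h1 : Order.succ (rnk hA t'.1) ≤ hgt hA X := succ_rnk_le_hgt hA (hTX t'.2)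
        exact hlim.succ_lt (lt_of_lt_of_le (Order.lt_succ _) h1)
      have : hgt hA (dcl T \ ucone t.1) + Ordinal.omega0 ≤ hgt hA X :=
        le_trans (add_le_add_left hT _) (add_omega0_le_of_lt_limit hlim hlT)
      exact lt_of_lt_of_le hflt (Ordinal.opow_le_opow_right (by norm_num) this)
    exact lt_of_le_of_lt key (finite_iSup_lt _ (two_opow_pos _) hbound)
  · -- successor case
    intro b hb
    obtain ⟨L, hL1, hL2⟩ := tops_cover hA X b
    have hc0 : ∃ x ∈ X, rnk hA x = b := by
      by_contra hc
      push_neg at hc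
      have : hgt hA X ≤ b := by
        refine hgt_le hA fun x hx => ?_
        rw [Order.succ_le_iff]
        exact lt_of_le_of_ne (hrnk_le hb x hx) (hc x hx)
      rw [hb] at this
      exact absurd this (not_le.2 (Order.lt_succ b))
    obtain ⟨c0, hc0X, hc0r⟩ := hc0
    set GB : Set A := {x | x ∈ X ∧ rnk hA x < b} with hGB
    have hPrec : Prec GB X := by
      refine ⟨c0, hc0X, fun x hx => ⟨hx.1, fun hcone => ?_⟩⟩
      have := rnk_mono hA hcone
      rw [hc0r] at this
      exact not_le.2 hx.2 this
    have hXS : FF hA GB < 2 ^ b * Ordinal.omega0 := by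
      have hflt := (IH GB hPrec).ff_lt hA
      have h1 : hgt hA GB ≤ b := hgt_le hA fun x hx => Order.succ_le_of_lt hx.2
      calc FF hA GB < 2 ^ (hgt hA GB + Ordinal.omega0) := hflt
        _ ≤ 2 ^ (b + Ordinal.omega0) :=
          Ordinal.opow_le_opow_right (by norm_num) (add_le_add_left h1 _)
        _ = 2 ^ b * Ordinal.omega0 := two_opow_add_omega0 b
    obtain ⟨m₀, hm₀⟩ := exists_nat_mul_of_lt_mul_omega0 (two_opow_pos b) hXS
    set XS := FF hA GB with hXSdef
    -- machinery for the measure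
    have hLSfin : {c : A | c ∈ L}.Finite := L.finite_toSet
    set p := {c : A | c ∈ L}.ncard with hp
    classical
    let TE : Set A → Set A := fun E => if h : IsFG E then h.choose else ∅
    have hTE : ∀ E : Set A, IsFG E → (TE E).Finite ∧ E = dcl (TE E) := by
      intro E h
      constructor
      · simp only [TE, dif_pos h]; exact h.choose_spec.1
      · simp only [TE, dif_pos h]; exact h.choose_spec.2
    let SE : Set A → Set A := fun E => {c | c ∈ L ∧ c ∈ E}
    let DC : Set A → Set A := fun E => dcl (SE E)
    let UE : Set A → Set A := fun E => {t | t ∈ TE E ∧ t ∉ DC E}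
    let FE : Set A → Set A := fun E => dcl (UE E)
    let φ : Set A → Ordinal.{u} := fun E => XS * ((SE E).ncard : Ordinal) + RK hA (FE E)
    have hSEfin : ∀ E : Set A, (SE E).Finite := fun E =>
      hLSfin.subset (fun c hc => hc.1)
    have hSEcard : ∀ E : Set A, (SE E).ncard ≤ p :=
      fun E => Set.ncard_le_ncard (fun c hc => hc.1) hLSfin
    have hFEfg : ∀ E : Set A, IsFG E → IsFG (FE E) := by
      intro E hE
      exact isFG_dcl (((hTE E hE).1).subset (fun t ht => ht.1))
    have hFEsub : ∀ E : Set A, IsFG E → E ⊆ X → FE E ⊆ GB := by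
      intro E hE hEX x hx
      obtain ⟨t, ⟨htTE, htDC⟩, hxt⟩ := hx
      have htE : t ∈ E := by
        rw [(hTE E hE).2]; exact subset_dcl htTE
      have htb : rnk hA t < b := by
        rcases lt_or_eq_of_le (hrnk_le hb t (hEX htE)) with h | h
        · exact h
        · exfalso
          obtain ⟨c, hcL, htc, hct⟩ := hL2 t (hEX htE) h
          have hcE : c ∈ E := hE.downclosed c t hct htE
          exact htDC ⟨c, ⟨hcL, hcE⟩, htc⟩
      have hxE : x ∈ E := hE.downclosed x t hxt htE
      exact ⟨hEX hxE, lt_of_le_of_lt (rnk_mono hA hxt) htb⟩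
    have hRKFE : ∀ E : Set A, IsFG E → E ⊆ X → RK hA (FE E) < XS := by
      intro E hE hEX
      exact RK_lt_FF hA (hFEfg E hE) (hFEsub E hE hEX)
    have hdecomp : ∀ E : Set A, IsFG E → E = DC E ∪ FE E := by
      intro E hE
      apply Set.eq_of_subset_of_subset
      · intro x hx
        have : x ∈ dcl (TE E) := by rw [← (hTE E hE).2]; exact hx
        obtain ⟨t, htTE, hxt⟩ := this
        by_cases hdc : t ∈ DC E
        · exact Or.inl (mem_dcl_of_le hxt hdc)
        · exact Or.inr ⟨t, ⟨htTE, hdc⟩, hxt⟩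
      · rintro x (hx | hx)
        · obtain ⟨c, hc, hxc⟩ := hx
          exact hE.downclosed x c hxc hc.2
        · obtain ⟨t, ht, hxt⟩ := hx
          have : t ∈ E := by rw [(hTE E hE).2]; exact subset_dcl ht.1
          exact hE.downclosed x t hxt this
    have hstrict : ∀ E E' : Set A, IsFG E' → E' ⊂ E → IsFG E → E ⊆ X → φ E' < φ E := by
      intro E E' hE' hss hE hEX
      have hE'X : E' ⊆ X := hss.1.trans hEX
      have hSEsub : SE E' ⊆ SE E := fun c hc => ⟨hc.1, hss.1 hc.2⟩
      have hcardle : (SE E').ncard ≤ (SE E).ncard := Set.ncard_le_ncard hSEsub (hSEfin E)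
      rcases lt_or_eq_of_le hcardle with hlt | heq
      · have h1 : φ E' < XS * ((SE E').ncard : Ordinal) + XS :=
          add_lt_add_right (hRKFE E' hE' hE'X) _
        have h2 : XS * ((SE E').ncard : Ordinal) + XS
            = XS * (((SE E').ncard + 1 : ℕ) : Ordinal) := by
          push_cast
          rw [mul_add, mul_one]
        have h3 : XS * (((SE E').ncard + 1 : ℕ) : Ordinal) ≤ XS * ((SE E).ncard : Ordinal) :=
          mul_le_mul_right (by exact_mod_cast Nat.succ_le_of_lt hlt) _
        calc φ E' < XS * ((SE E').ncard : Ordinal) + XS := h1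
          _ = XS * (((SE E').ncard + 1 : ℕ) : Ordinal) := h2
          _ ≤ XS * ((SE E).ncard : Ordinal) := h3
          _ ≤ φ E := le_add_right le_rfl
      · have hSEeq : SE E' = SE E :=
          Set.eq_of_subset_of_ncard_le hSEsub heq.ge (hSEfin E)
        have hDCeq : DC E' = DC E := by
          show dcl (SE E') = dcl (SE E)
          rw [hSEeq]
        have hFEss : FE E' ⊂ FE E := by
          constructor
          · intro x hx
            obtain ⟨t', ⟨ht'TE, ht'DC⟩, hxt'⟩ := hx
            have ht'E' : t' ∈ E' := by rw [(hTE E' hE').2]; exact subset_dcl ht'TE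
            have ht'E : t' ∈ E := hss.1 ht'E'
            have : t' ∈ dcl (TE E) := by rw [← (hTE E hE).2]; exact ht'E
            obtain ⟨t, htTE, ht't⟩ := this
            have htDC : t ∉ DC E := by
              intro hc
              exact ht'DC (by rw [hDCeq]; exact mem_dcl_of_le ht't hc)
            exact ⟨t, ⟨htTE, htDC⟩, hxt'.trans ht't⟩
          · intro hc
            have : FE E' = FE E := Set.eq_of_subset_of_subset (by
              intro x hx
              obtain ⟨t', ⟨ht'TE, ht'DC⟩, hxt'⟩ := hx
              have ht'E' : t' ∈ E' := by rw [(hTE E' hE').2]; exact subset_dcl ht'TE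
              have ht'E : t' ∈ E := hss.1 ht'E'
              have : t' ∈ dcl (TE E) := by rw [← (hTE E hE).2]; exact ht'E
              obtain ⟨t, htTE, ht't⟩ := this
              have htDC : t ∉ DC E := fun hcc =>
                ht'DC (by rw [hDCeq]; exact mem_dcl_of_le ht't hcc)
              exact ⟨t, ⟨htTE, htDC⟩, hxt'.trans ht't⟩) hc
            have : E' = E := by
              rw [hdecomp E' hE', hdecomp E hE, hDCeq, this]
            exact hss.2 (le_of_eq this.symm)
          
        have : RK hA (FE E') < RK hA (FE E) :=
          RK_lt_of_rel hA ⟨hFEfg E' hE', hFEss⟩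
        have h4 : φ E' = XS * ((SE E).ncard : Ordinal) + RK hA (FE E') := by
          show XS * ((SE E').ncard : Ordinal) + _ = _
          rw [hSEeq]
        rw [h4]
        exact add_lt_add_right this _
    have hRKle : ∀ E : Set A, IsFG E → E ⊆ X → RK hA E ≤ φ E := by
      intro E0
      induction E0 using (wf_DRel hA).induction with
      | _ E IH2 => ?_
      intro hE hEX
      refine RK_le_of hA fun D' hrel => ?_
      exact lt_of_le_of_lt (IH2 D' hrel hrel.1 (hrel.2.1.trans hEX))
        (hstrict E D' hrel.1 hrel.2 hE hEX)
    refine ⟨m₀ * p + m₀ + 1, ?_⟩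
    have hFFle : FF hA X ≤ XS * (p : Ordinal) + XS + 1 := by
      refine FF_le hA fun D hFG hDX => ?_
      have h1 : RK hA D ≤ φ D := hRKle D hFG hDX
      have h2 : φ D ≤ XS * (p : Ordinal) + XS := by
        refine add_le_add ?_ (hRKFE D hFG hDX).le
        exact mul_le_mul_right (by exact_mod_cast hSEcard D) _
      have := h1.trans h2
      exact lt_of_le_of_lt this (lt_add_of_pos_right _ zero_lt_one)
    refine hFFle.trans ?_
    have hXSle : XS ≤ 2 ^ b * (m₀ : Ordinal) := hm₀
    have hfinal : XS * (p : Ordinal) + XS + 1 ≤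
        2 ^ b * ((m₀ * p + m₀ + 1 : ℕ) : Ordinal) := by
      have e1 : ((m₀ * p + m₀ + 1 : ℕ) : Ordinal) = (m₀ * p : ℕ) + (m₀ : ℕ) + 1 := by
        push_cast; ring
      have hXp : XS * (p : Ordinal) ≤ 2 ^ b * ((m₀ * p : ℕ) : Ordinal) := by
        calc XS * (p : Ordinal) ≤ (2 ^ b * (m₀ : Ordinal)) * (p : Ordinal) :=
              mul_le_mul_left hXSle _
          _ = 2 ^ b * ((m₀ * p : ℕ) : Ordinal) := by
              rw [mul_assoc]; congr 1; push_cast; rfl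
      have h1le : (1 : Ordinal) ≤ 2 ^ b := Order.one_le_iff_pos.2 (two_opow_pos b)
      rw [e1, mul_add, mul_add, mul_one]
      calc XS * (p : Ordinal) + XS + 1
          ≤ 2 ^ b * ((m₀ * p : ℕ) : Ordinal) + 2 ^ b * (m₀ : Ordinal) + 1 :=
            add_le_add (add_le_add hXp hXSle) le_rfl
        _ ≤ 2 ^ b * ((m₀ * p : ℕ) : Ordinal) + 2 ^ b * (m₀ : Ordinal) + 2 ^ b :=
            add_le_add le_rfl h1le
    exact hfinal
  · -- zero case
    intro h0
    refine FF_le hA fun D hFG hDX => ?_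
    have hD : RK hA D ≤ 0 := by
      refine RK_le_of hA fun D' hrel => ?_
      exfalso
      obtain ⟨x, hx, _⟩ := Set.exists_of_ssubset hrel.2
      have := succ_rnk_le_hgt hA (hDX hx)
      rw [h0] at this
      exact absurd this (Order.succ_ne_bot _ ∘ le_bot_iff.mp)
    exact lt_of_le_of_lt hD zero_lt_one

/-! ### generic rank comparison tools -/

lemma acc_of_strict {α : Type v} {r : α → α → Prop} (φ : α → Ordinal.{v})
    (hφ : ∀ x y, r x y → φ x < φ y) (a : α) : Acc r a := by
  have hwf : WellFounded r := Subrelation.wf (fun {x y} h => hφ x y h)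
    (InvImage.wf φ Ordinal.lt_wf)
  exact hwf.apply a

lemma rank_le_of_strict {α : Type v} {r : α → α → Prop} (φ : α → Ordinal.{v})
    (hφ : ∀ x y, r x y → φ x < φ y) (a : α) (ha : Acc r a) : ha.rank ≤ φ a := by
  induction ha with
  | intro a h IH =>
    rw [Acc.rank_eq]
    refine Ordinal.iSup_le fun b => ?_
    rw [Order.succ_le_iff]
    exact lt_of_le_of_lt (IH b.1 b.2) (hφ b.1 a b.2)

/-! ### the height of `A` as intrinsic height -/

def DecP (B : Type u) [Preorder B] : List B → Prop :=
  fun l => l.Pairwise (fun a b => b < a)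

lemma decP_append_singleton {B : Type u} [Preorder B] {l : List B} {a : B} :
    DecP B (l ++ [a]) ↔ DecP B l ∧ ∀ x ∈ l, a < x := by
  constructor
  · intro h
    obtain ⟨h1, h2, h3⟩ := List.pairwise_append.1 h
    exact ⟨h1, fun x hx => h3 x hx a (by simp)⟩
  · intro ⟨h1, h2⟩
    refine List.pairwise_append.2 ⟨h1, by simp [DecP], ?_⟩
    intro x hx b hb
    rw [List.mem_singleton.1 hb]
    exact h2 x hx

/-- helper: last element of `l ++ [a]` -/
lemma getLast?_append_singleton {B : Type u} {l : List B} {a : B} :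
    (l ++ [a]).getLast? = some a := by
  simp [List.getLast?_append]

noncomputable def phiA (hA : IsWqo A) : List A → Ordinal.{u} := fun l =>
  match l.getLast? with
  | none => hgt hA (Set.univ)
  | some x => rnk hA x

lemma phiA_strict : ∀ t s : List A, ExtRel (DecP A) t s → phiA hA t < phiA hA s := by
  rintro t s ⟨hP, a, rfl⟩
  rcases List.eq_nil_or_concat s with rfl | ⟨l, x, rfl⟩
  rotate_left
  · rw [List.concat_eq_append] at hP ⊢
    show phiA hA ((l ++ [x]) ++ [a]) < phiA hA (l ++ [x])
    rw [phiA, phiA]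
    simp only [getLast?_append_singleton]
    have hx : x ∈ l ++ [x] := by simp
    have hPs : DecP A ((l ++ [x]) ++ [a]) := hP
    have := (decP_append_singleton.1 hPs).2 x hx
    exact rnk_lt_of_lt hA this
  · show phiA hA ([] ++ [a]) < phiA hA []
    rw [phiA, phiA]
    simp only [List.nil_append, getLast?_append_singleton, List.getLast?_nil]
    exact lt_of_lt_of_le (Order.lt_succ _) (succ_rnk_le_hgt hA (Set.mem_univ a))
lemma height_eq_hgt_univ : height A = hgt hA (Set.univ) := by
  have hacc : Acc (ExtRel (DecP A)) ([] : List A) :=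
    acc_of_strict (phiA hA) (phiA_strict hA) []
  have hrw : height A = hacc.rank := by
    show treeRank (DecP A) = _
    rw [treeRank, dif_pos hacc]
  rw [hrw]
  apply le_antisymm
  · have := rank_le_of_strict (phiA hA) (phiA_strict hA) [] hacc
    simpa [phiA] using this
  · -- hgt univ ≤ rank
    have CL : ∀ x : A, ∀ l : List A, DecP A (l ++ [x]) →
        ∀ hl : Acc (ExtRel (DecP A)) (l ++ [x]), rnk hA x ≤ hl.rank := by
      intro x0
      induction x0 using (wf_lt hA).induction with
      | _ x IHx => ?_
      intro l hP hl
      rw [rnk_eq]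
      refine Ordinal.iSup_le fun z => ?_
      have hchild : ExtRel (DecP A) ((l ++ [x]) ++ [z.1]) (l ++ [x]) := by
        refine ⟨?_, z.1, rfl⟩
        refine decP_append_singleton.2 ⟨hP, ?_⟩
        intro y hy
        rcases List.mem_append.1 hy with h | h
        · exact lt_trans z.2 ((decP_append_singleton.1 hP).2 y h)
        · rw [List.mem_singleton.1 h]; exact z.2
      have h1 : rnk hA z.1 ≤ (hl.inv hchild).rank :=
        IHx z.1 z.2 (l ++ [x]) hchild.1 (hl.inv hchild)
      have h2 : (hl.inv hchild).rank < hl.rank := Acc.rank_lt_of_rel hl hchild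
      exact Order.succ_le_of_lt (lt_of_le_of_lt h1 h2)
    refine Ordinal.iSup_le fun x => ?_
    have hP1 : DecP A ([] ++ [x.1]) := by simp [DecP]
    have hchild : ExtRel (DecP A) ([] ++ [x.1]) [] := ⟨hP1, x.1, rfl⟩
    have h1 := CL x.1 [] hP1 (hacc.inv hchild)
    have h2 : (hacc.inv hchild).rank < hacc.rank := Acc.rank_lt_of_rel hacc hchild
    exact Order.succ_le_of_lt (lt_of_le_of_lt h1 h2)

/-! ### the Pf side -/

lemma Pf_le_iff {S T : Pf A} : S ≤ T ↔ dcl S.1 ⊆ dcl T.1 := by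
  constructor
  · rintro h x ⟨a, ha, hxa⟩
    obtain ⟨c, hc, hac⟩ := h a ha
    exact ⟨c, hc, hxa.trans hac⟩
  · intro h a ha
    exact h (subset_dcl ha)

lemma Pf_lt_dcl {S T : Pf A} (h : S < T) : dcl S.1 ⊂ dcl T.1 := by
  rw [lt_iff_le_not_ge] at h
  rw [Set.ssubset_def]
  exact ⟨Pf_le_iff.1 h.1, fun hc => h.2 (Pf_le_iff.2 hc)⟩

noncomputable def phiPf (hA : IsWqo A) : List (Pf A) → Ordinal.{u} := fun l =>
  match l.getLast? with
  | none => FF hA (Set.univ)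
  | some S => RK hA (dcl S.1)

lemma phiPf_strict : ∀ t s : List (Pf A), ExtRel (DecP (Pf A)) t s →
    phiPf hA t < phiPf hA s := by
  rintro t s ⟨hP, S', rfl⟩
  rcases List.eq_nil_or_concat s with rfl | ⟨l, S, rfl⟩
  rotate_left
  · rw [List.concat_eq_append] at hP ⊢
    show phiPf hA ((l ++ [S]) ++ [S']) < phiPf hA (l ++ [S])
    rw [phiPf, phiPf]
    simp only [getLast?_append_singleton]
    have hS : S ∈ l ++ [S] := by simp
    have hlt : S' < S := (decP_append_singleton.1 hP).2 S hS
    exact RK_lt_of_rel hA ⟨isFG_dcl S'.2, Pf_lt_dcl hlt⟩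
  · show phiPf hA ([] ++ [S']) < phiPf hA []
    rw [phiPf, phiPf]
    simp only [List.nil_append, getLast?_append_singleton, List.getLast?_nil]
    exact RK_lt_FF hA (isFG_dcl S'.2) (Set.subset_univ _)

lemma accPf (hA : IsWqo A) : Acc (ExtRel (DecP (Pf A))) ([] : List (Pf A)) :=
  acc_of_strict (phiPf hA) (phiPf_strict hA) []

lemma heightPf_eq (hA : IsWqo A) : height (Pf A) = (accPf hA).rank := by
  show treeRank (DecP (Pf A)) = _
  rw [treeRank, dif_pos (accPf hA)]

lemma heightPf_le_FF : height (Pf A) ≤ FF hA (Set.univ) := by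
  rw [heightPf_eq hA]
  have := rank_le_of_strict (phiPf hA) (phiPf_strict hA) [] (accPf hA)
  simpa [phiPf] using this

/-! ### lower bound -/

def empt : Pf A := ⟨∅, Set.finite_empty⟩

def sing (x : A) : Pf A := ⟨{x}, Set.finite_singleton x⟩

lemma empt_lt_of_sing_le {x : A} {S : Pf A} (h : sing x ≤ S) : empt (A := A) < S := by
  rw [lt_iff_le_not_ge]
  constructor
  · intro a ha
    exact absurd ha (Set.notMem_empty a)
  · intro hc
    obtain ⟨b, hb, _⟩ := (h.trans hc) x rfl
    exact absurd hb (Set.notMem_empty b)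

lemma sing_lt_sing {x y : A} (h : y < x) : sing y < sing (A := A) x := by
  rw [lt_iff_le_not_ge] at h ⊢
  constructor
  · intro a ha
    rw [Set.mem_singleton_iff.1 ha]
    exact ⟨x, rfl, h.1⟩
  · intro hc
    obtain ⟨b, hb, hxb⟩ := hc x rfl
    rw [Set.mem_singleton_iff.1 hb] at hxb
    exact h.2 hxb

lemma CLPf (hA : IsWqo A) : ∀ x : A, ∀ l : List (Pf A), DecP (Pf A) (l ++ [sing x]) →
    ∀ hl : Acc (ExtRel (DecP (Pf A))) (l ++ [sing x]), 1 + rnk hA x ≤ hl.rank := by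
  intro x0
  induction x0 using (wf_lt hA).induction with
  | _ x IHx => ?_
  intro l hP hl
  have hone : (1 : Ordinal.{u}) ≤ hl.rank := by
    have hchild : ExtRel (DecP (Pf A)) ((l ++ [sing x]) ++ [empt]) (l ++ [sing x]) := by
      refine ⟨?_, empt, rfl⟩
      refine decP_append_singleton.2 ⟨hP, ?_⟩
      intro y hy
      rcases List.mem_append.1 hy with h | h
      · exact empt_lt_of_sing_le ((decP_append_singleton.1 hP).2 y h).le
      · rw [List.mem_singleton.1 h]
        exact empt_lt_of_sing_le le_rfl
    have := Acc.rank_lt_of_rel hl hchild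
    exact Order.one_le_iff_pos.2 (lt_of_le_of_lt zero_le this)
  have hstep : ∀ z : A, z < x → Order.succ (1 + rnk hA z) ≤ hl.rank := by
    intro z hz
    have hchild : ExtRel (DecP (Pf A)) ((l ++ [sing x]) ++ [sing z]) (l ++ [sing x]) := by
      refine ⟨?_, sing z, rfl⟩
      refine decP_append_singleton.2 ⟨hP, ?_⟩
      intro y hy
      rcases List.mem_append.1 hy with h | h
      · exact lt_trans (sing_lt_sing hz) ((decP_append_singleton.1 hP).2 y h)
      · rw [List.mem_singleton.1 h]
        exact sing_lt_sing hz
    have h1 : 1 + rnk hA z ≤ (hl.inv hchild).rank :=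
      IHx z hz (l ++ [sing x]) hchild.1 (hl.inv hchild)
    exact Order.succ_le_of_lt (lt_of_le_of_lt h1 (Acc.rank_lt_of_rel hl hchild))
  rw [rnk_eq]
  cases isEmpty_or_nonempty {z : A // z < x} with
  | inl hemp =>
    rw [ciSup_of_empty]
    simpa using hone
  | inr hne =>
    rw [(Ordinal.isNormal_add_right 1).map_iSup Ordinal.bddAbove_of_small]
    refine Ordinal.iSup_le fun z => ?_
    rw [Ordinal.add_succ]
    exact hstep z.1 z.2

lemma one_add_height_le (hA : IsWqo A) : 1 + height A ≤ height (Pf A) := by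
  rw [height_eq_hgt_univ hA, heightPf_eq hA]
  have hone : (1 : Ordinal.{u}) ≤ (accPf hA).rank := by
    have hchild : ExtRel (DecP (Pf A)) ([] ++ [empt]) ([] : List (Pf A)) := by
      refine ⟨?_, empt, rfl⟩
      simp [DecP]
    have := Acc.rank_lt_of_rel (accPf hA) hchild
    exact Order.one_le_iff_pos.2 (lt_of_le_of_lt zero_le this)
  cases isEmpty_or_nonempty A with
  | inl hemp =>
    have : hgt hA (Set.univ : Set A) = 0 := by
      rw [hgt, ciSup_of_empty]
      rfl
    rw [this, add_zero]
    exact hone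
  | inr hne =>
    rw [hgt, (Ordinal.isNormal_add_right 1).map_iSup Ordinal.bddAbove_of_small]
    refine Ordinal.iSup_le fun x => ?_
    rw [Ordinal.add_succ]
    have hP1 : DecP (Pf A) ([] ++ [sing x.1]) := by simp [DecP]
    have hchild : ExtRel (DecP (Pf A)) ([] ++ [sing x.1]) [] := ⟨hP1, sing x.1, rfl⟩
    have h1 := CLPf hA x.1 [] hP1 ((accPf hA).inv hchild)
    exact Order.succ_le_of_lt (lt_of_le_of_lt h1 (Acc.rank_lt_of_rel (accPf hA) hchild))

end PfHeight


/-- Theorem 3.3: bounds on the height of the finitary powerset. -/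
theorem pf_height_bounds (A : Type u) [Preorder A] (hA : IsWqo A) :
    1 + height A ≤ height (Pf A) ∧
    (Order.IsSuccLimit (height A) → height (Pf A) ≤ 2 ^ height A) ∧
    ((∃ β : Ordinal.{u}, height A = β + 1) →
      ∃ m : ℕ, height (Pf A) ≤ 2 ^ height A * m) := by
  refine ⟨PfHeight.one_add_height_le hA, ?_, ?_⟩
  · intro hlim
    have hgoal := PfHeight.goal_all hA (Set.univ : Set A)
    have h1 : height (Pf A) ≤ PfHeight.FF hA Set.univ := PfHeight.heightPf_le_FF hA
    have heq := PfHeight.height_eq_hgt_univ hA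
    rw [heq] at hlim ⊢
    exact h1.trans (hgoal.1 hlim)
  · rintro ⟨β, hβ⟩
    have hgoal := PfHeight.goal_all hA (Set.univ : Set A)
    have heq := PfHeight.height_eq_hgt_univ hA
    have hsucc : PfHeight.hgt hA (Set.univ : Set A) = Order.succ β := by
      rw [← heq, hβ, Ordinal.add_one_eq_succ]
    obtain ⟨m, hm⟩ := hgoal.2.1 β hsucc
    refine ⟨m, (PfHeight.heightPf_le_FF hA).trans (hm.trans ?_)⟩
    have h2 : (2 : Ordinal.{u}) ^ β ≤ 2 ^ height A := by
      rw [hβ]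
      exact Ordinal.opow_le_opow_right (by norm_num)
        (le_of_lt (lt_add_of_pos_right _ zero_lt_one))
    exact mul_le_mul_left h2 _
end

section
/- Let A be a wqo with h(A) = α + 1 for an ordinal α. Then there is a partition A = A_⊥ ⊎ A_⊤ such that h(A_⊥) = α (with the order induced from A) and A_⊤ is an antichain modulo equivalence, i.e., any two elements x, y of A_⊤ are either incomparable or satisfy both x ≤ y and y ≤ x. -/
open Ordinal

universe u

section Aux

variable {A : Type u} [Preorder A]

lemma wqo_wf (hA : IsWqo A) : WellFounded ((· < ·) : A → A → Prop) := by
  rw [RelEmbedding.wellFounded_iff_isEmpty]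
  constructor
  intro f
  obtain ⟨i, j, hij, hle⟩ := hA f
  exact (f.map_rel_iff.2 hij).not_ge hle

/-- The decreasing-list predicate. -/
abbrev DecP (A : Type u) [Preorder A] : List A → Prop :=
  fun l => l.Pairwise (fun a b => b < a)

lemma decP_append_singleton {l : List A} {b : A} :
    DecP A (l ++ [b]) ↔ DecP A l ∧ ∀ c ∈ l, b < c := by
  simp [DecP, List.pairwise_append]

/-- Characterization of children of a node `l ++ [a]` of the decreasing tree. -/
lemma extRel_append_iff {l : List A} {a : A} (hl : DecP A (l ++ [a])) (t : List A) :
    ExtRel (DecP A) t (l ++ [a]) ↔ ∃ b : A, b < a ∧ t = (l ++ [a]) ++ [b] := by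
  constructor
  · rintro ⟨ht, b, rfl⟩
    refine ⟨b, ?_, rfl⟩
    exact (decP_append_singleton.1 ht).2 a (by simp)
  · rintro ⟨b, hb, rfl⟩
    refine ⟨decP_append_singleton.2 ⟨hl, ?_⟩, b, rfl⟩
    intro c hc
    rcases List.mem_append.1 hc with hc | hc
    · exact hb.trans ((decP_append_singleton.1 hl).2 c hc)
    · simp at hc; subst hc; exact hb

/-- The main structural lemma: the node `l ++ [a]` of the decreasing tree is
accessible and its rank is the rank of `a`. -/
lemma dec_acc_rank (wf : WellFounded ((· < ·) : A → A → Prop)) :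
    ∀ a : A, ∀ l : List A, DecP A (l ++ [a]) →
      ∃ h : Acc (ExtRel (DecP A)) (l ++ [a]), h.rank = (wf.apply a).rank := by
  intro a
  induction a using wf.induction with
  | _ a IH =>
    intro l hl
    have hacc : Acc (ExtRel (DecP A)) (l ++ [a]) := by
      constructor
      intro t ht
      obtain ⟨b, hb, rfl⟩ := (extRel_append_iff hl t).1 ht
      exact ((IH b hb (l ++ [a]) ((extRel_append_iff hl _).2 ⟨b, hb, rfl⟩).1).choose)
    refine ⟨hacc, ?_⟩
    rw [Acc.rank_eq, Acc.rank_eq]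
    apply le_antisymm
    · rw [Ordinal.iSup_le_iff]
      rintro ⟨t, ht⟩
      obtain ⟨b, hb, rfl⟩ := (extRel_append_iff hl t).1 ht
      obtain ⟨h', hrk⟩ := IH b hb (l ++ [a]) ((extRel_append_iff hl _).2 ⟨b, hb, rfl⟩).1
      have : (hacc.inv ht).rank = ((wf.apply b).rank) := by
        rw [Subsingleton.elim (hacc.inv ht) h', hrk]
      rw [this]
      exact Ordinal.le_iSup (fun c : {c // c < a} => Order.succ ((wf.apply c.1).rank)) ⟨b, hb⟩
    · rw [Ordinal.iSup_le_iff]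
      rintro ⟨b, hb⟩
      have ht : ExtRel (DecP A) ((l ++ [a]) ++ [b]) (l ++ [a]) :=
        (extRel_append_iff hl _).2 ⟨b, hb, rfl⟩
      obtain ⟨h', hrk⟩ := IH b hb (l ++ [a]) ht.1
      have : (hacc.inv ht).rank = ((wf.apply b).rank) := by
        rw [Subsingleton.elim (hacc.inv ht) h', hrk]
      calc Order.succ ((wf.apply b).rank) = Order.succ ((hacc.inv ht).rank) := by rw [this]
        _ ≤ _ := Ordinal.le_iSup
            (fun t : {t // ExtRel (DecP A) t (l ++ [a])} => Order.succ ((hacc.inv t.2).rank))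
            ⟨_, ht⟩

lemma extRel_nil_iff (t : List A) :
    ExtRel (DecP A) t ([] : List A) ↔ ∃ b : A, t = [b] := by
  constructor
  · rintro ⟨ht, b, rfl⟩; exact ⟨b, rfl⟩
  · rintro ⟨b, rfl⟩; exact ⟨List.pairwise_singleton _ _, b, rfl⟩

lemma dec_acc_nil (wf : WellFounded ((· < ·) : A → A → Prop)) :
    Acc (ExtRel (DecP A)) ([] : List A) := by
  constructor
  intro t ht
  obtain ⟨b, rfl⟩ := (extRel_nil_iff t).1 ht
  exact (dec_acc_rank wf b [] (List.pairwise_singleton _ _)).choose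

/-- The height of a wqo is the supremum of the successors of element ranks. -/
lemma height_eq (wf : WellFounded ((· < ·) : A → A → Prop)) :
    height A = ⨆ b : A, Order.succ ((wf.apply b).rank) := by
  have hacc := dec_acc_nil wf
  have : height A = hacc.rank := by
    rw [height, treeRank, dif_pos hacc]
  rw [this, Acc.rank_eq]
  apply le_antisymm
  · rw [Ordinal.iSup_le_iff]
    rintro ⟨t, ht⟩
    obtain ⟨b, rfl⟩ := (extRel_nil_iff t).1 ht
    obtain ⟨h', hrk⟩ := dec_acc_rank wf b [] (List.pairwise_singleton _ _)
    have : (hacc.inv ht).rank = (wf.apply b).rank := by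
      rw [Subsingleton.elim (hacc.inv ht) h', hrk]
    rw [this]
    exact Ordinal.le_iSup (fun b : A => Order.succ ((wf.apply b).rank)) b
  · rw [Ordinal.iSup_le_iff]
    intro b
    have ht : ExtRel (DecP A) [b] ([] : List A) := (extRel_nil_iff _).2 ⟨b, rfl⟩
    obtain ⟨h', hrk⟩ := dec_acc_rank wf b [] (List.pairwise_singleton _ _)
    have : (hacc.inv ht).rank = (wf.apply b).rank := by
      rw [Subsingleton.elim (hacc.inv ht) h', hrk]
    calc Order.succ ((wf.apply b).rank) = Order.succ ((hacc.inv ht).rank) := by rw [this]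
      _ ≤ _ := Ordinal.le_iSup
          (fun t : {t // ExtRel (DecP A) t ([] : List A)} => Order.succ ((hacc.inv t.2).rank))
          ⟨_, ht⟩

/-- On a downward-closed subset, element ranks agree with ranks in the ambient type. -/
lemma subtype_rank_eq {S : Set A} (wf : WellFounded ((· < ·) : A → A → Prop))
    (wfS : WellFounded ((· < ·) : S → S → Prop))
    (hdc : ∀ x ∈ S, ∀ y : A, y < x → y ∈ S) :
    ∀ x : A, ∀ hx : x ∈ S, (wfS.apply ⟨x, hx⟩).rank = (wf.apply x).rank := by
  intro x
  induction x using wf.induction with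
  | _ x IH =>
    intro hx
    rw [Acc.rank_eq, Acc.rank_eq]
    apply le_antisymm
    · rw [Ordinal.iSup_le_iff]
      rintro ⟨⟨y, hyS⟩, hy⟩
      have hyx : y < x := hy
      have : ((wfS.apply ⟨x, hx⟩).inv hy).rank = (wf.apply y).rank := by
        rw [Subsingleton.elim ((wfS.apply ⟨x, hx⟩).inv hy) (wfS.apply ⟨y, hyS⟩)]
        exact IH y hyx hyS
      rw [this]
      exact Ordinal.le_iSup (fun b : {b // b < x} => Order.succ (((wf.apply x).inv b.2).rank))
        ⟨y, hyx⟩ |>.trans (by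
          apply le_of_eq
          congr 1)
    · rw [Ordinal.iSup_le_iff]
      rintro ⟨y, hyx⟩
      have hyS : y ∈ S := hdc x hx y hyx
      have hy : (⟨y, hyS⟩ : S) < ⟨x, hx⟩ := hyx
      have h1 : ((wf.apply x).inv hyx).rank = (wf.apply y).rank := by
        rw [Subsingleton.elim ((wf.apply x).inv hyx) (wf.apply y)]
      have h2 : ((wfS.apply ⟨x, hx⟩).inv hy).rank = (wf.apply y).rank := by
        rw [Subsingleton.elim ((wfS.apply ⟨x, hx⟩).inv hy) (wfS.apply ⟨y, hyS⟩)]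
        exact IH y hyx hyS
      rw [h1, ← h2]
      exact Ordinal.le_iSup
        (fun b : {b : S // b < ⟨x, hx⟩} => Order.succ (((wfS.apply ⟨x, hx⟩).inv b.2).rank))
        ⟨⟨y, hyS⟩, hy⟩

end Aux

/-- If `h(A) = α + 1` then `A` partitions into `A_⊥ ⊎ A_⊤` where `h(A_⊥) = α`
and any two elements of `A_⊤` are incomparable or equivalent. -/
theorem height_succ_decomposition (A : Type u) [Preorder A] (hA : IsWqo A)
    (α : Ordinal.{u}) (h : height A = α + 1) :
    ∃ S : Set A, height ↥S = α ∧
      ∀ x ∈ Sᶜ, ∀ y ∈ Sᶜ, (¬ x ≤ y ∧ ¬ y ≤ x) ∨ (x ≤ y ∧ y ≤ x) := by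
  have wf := wqo_wf hA
  set rk : A → Ordinal.{u} := fun a => (wf.apply a).rank with hrk
  have rk_lt : ∀ {a b : A}, a < b → rk a < rk b := fun hab => Acc.rank_lt_of_rel _ hab
  have hsup : height A = ⨆ b : A, Order.succ (rk b) := height_eq wf
  rw [h] at hsup
  -- every rank is ≤ α
  have hle : ∀ a : A, rk a ≤ α := by
    intro a
    have := Ordinal.le_iSup (fun b : A => Order.succ (rk b)) a
    rw [← hsup] at this
    have : Order.succ (rk a) ≤ Order.succ α := by
      rwa [Ordinal.add_one_eq_succ] at this
    exact Order.succ_le_succ_iff.1 this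
  -- some element has rank α
  have hex : ∃ a : A, rk a = α := by
    by_contra hc
    push_neg at hc
    have : (⨆ b : A, Order.succ (rk b)) ≤ α := by
      rw [Ordinal.iSup_le_iff]
      intro b
      exact Order.succ_le_of_lt ((hle b).lt_of_ne (hc b))
    rw [← hsup, Ordinal.add_one_eq_succ] at this
    exact (Order.lt_succ α).not_ge this
  obtain ⟨a₀, ha₀⟩ := hex
  refine ⟨{x : A | rk x < α}, ?_, ?_⟩
  · -- height of S is α
    set S : Set A := {x : A | rk x < α}
    have hSwqo : IsWqo S := by
      intro f
      obtain ⟨i, j, hij, hle'⟩ := hA (fun n => (f n : A))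
      exact ⟨i, j, hij, hle'⟩
    have wfS := wqo_wf hSwqo
    have hdc : ∀ x ∈ S, ∀ y : A, y < x → y ∈ S := fun x hx y hyx => (rk_lt hyx).trans hx
    have hrkS : ∀ (x : A) (hx : x ∈ S), (wfS.apply ⟨x, hx⟩).rank = rk x :=
      subtype_rank_eq wf wfS hdc
    rw [height_eq wfS]
    apply le_antisymm
    · rw [Ordinal.iSup_le_iff]
      rintro ⟨x, hx⟩
      rw [hrkS x hx]
      exact Order.succ_le_of_lt hx
    · -- α = rank a₀ = sup over y < a₀
      have hr : α = ⨆ b : {b // b < a₀}, Order.succ (((wf.apply a₀).inv b.2).rank) := by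
        rw [← ha₀]; exact Acc.rank_eq _
      rw [hr, Ordinal.iSup_le_iff]
      rintro ⟨y, hy⟩
      have hyS : y ∈ S := by
        have : rk y < α := ha₀ ▸ rk_lt hy
        exact this
      have h1 : ((wf.apply a₀).inv hy).rank = rk y := by
        rw [Subsingleton.elim ((wf.apply a₀).inv hy) (wf.apply y)]
      rw [h1, ← hrkS y hyS]
      exact Ordinal.le_iSup (fun b : S => Order.succ ((wfS.apply b).rank)) ⟨y, hyS⟩
  · -- complement is an antichain modulo equivalence
    intro x hx y hy
    simp only [Set.mem_compl_iff, Set.mem_setOf_eq, not_lt] at hx hy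
    have hxα : rk x = α := le_antisymm (hle x) hx
    have hyα : rk y = α := le_antisymm (hle y) hy
    by_cases hxy : x ≤ y
    · by_cases hyx : y ≤ x
      · exact Or.inr ⟨hxy, hyx⟩
      · exact absurd (rk_lt (lt_of_le_not_ge hxy hyx)) (by rw [hxα, hyα]; exact lt_irrefl α)
    · by_cases hyx : y ≤ x
      · exact absurd (rk_lt (lt_of_le_not_ge hyx hxy)) (by rw [hxα, hyα]; exact lt_irrefl α)
      · exact Or.inl ⟨hxy, hyx⟩
end

section
/- Let A be a wqo with w(A) = α + n where α is an ordinal and n < ω. Then there exists an antichain X = {x_1, …, x_n} of n pairwise incomparable elements of A such that the substructure B = A_{⊥X} of all elements of A incomparable to every x_i satisfies w(B) = α; in particular the disjoint sum B ⊔ Γ_n is isomorphic to a substructure of A. -/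
open Ordinal

universe u

section Transfer

variable {β γ : Type u} {r : β → β → Prop} {s : γ → γ → Prop}

lemma acc_transfer (f : β → γ)
    (h1 : ∀ b b', r b' b → s (f b') (f b)) :
    ∀ {c : γ}, Acc s c → ∀ b, f b = c → Acc r b := by
  intro c hc
  induction hc with
  | intro c _hc ih =>
    rintro b rfl
    exact Acc.intro b fun b' hr => ih (f b') (h1 b b' hr) b' rfl

lemma rank_transfer (f : β → γ)
    (h1 : ∀ b b', r b' b → s (f b') (f b))
    (h2 : ∀ b c, s c (f b) → ∃ b', r b' b ∧ f b' = c) :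
    ∀ {c : γ} (hc : Acc s c), ∀ b (hb : Acc r b), f b = c → hb.rank = hc.rank := by
  intro c hc
  induction hc with
  | intro c hc' ih =>
    rintro b hb rfl
    apply le_antisymm
    · rw [hb.rank_eq]
      apply Ordinal.iSup_le
      rintro ⟨b', hr⟩
      have hs : s (f b') (f b) := h1 b b' hr
      have heq : (hb.inv hr).rank = (hc' (f b') hs).rank := ih (f b') hs b' (hb.inv hr) rfl
      rw [heq]
      exact Order.succ_le_of_lt (Acc.rank_lt_of_rel (Acc.intro (f b) hc') hs)
    · rw [(Acc.intro (f b) hc').rank_eq]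
      apply Ordinal.iSup_le
      rintro ⟨y, hy⟩
      obtain ⟨b', hr, rfl⟩ := h2 b y hy
      have heq : (hb.inv hr).rank = (hc' (f b') hy).rank := ih (f b') hy b' (hb.inv hr) rfl
      have h3 : ((Acc.intro (f b) hc').inv hy).rank = (hb.inv hr).rank := heq.symm
      rw [h3]
      exact Order.succ_le_of_lt (Acc.rank_lt_of_rel hb hr)

end Transfer

lemma not_acc_descend {δ : Type*} {r : δ → δ → Prop} {b : δ} (h : ¬ Acc r b) :
    ∃ c, r c b ∧ ¬ Acc r c := by
  by_contra hc
  push_neg at hc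
  exact h (Acc.intro b hc)

lemma acc_of_wqo {A : Type u} [Preorder A] (hA : IsWqo A) (l₀ : List A) :
    Acc (ExtRel (fun l : List A => l.Pairwise (fun a b => ¬ a ≤ b ∧ ¬ b ≤ a))) l₀ := by
  set P : List A → Prop := fun l => l.Pairwise (fun a b => ¬ a ≤ b ∧ ¬ b ≤ a) with hP
  by_contra h0
  have step : ∀ t : {l : List A // ¬ Acc (ExtRel P) l},
      ∃ t' : {l : List A // ¬ Acc (ExtRel P) l}, ExtRel P t'.1 t.1 := by
    rintro ⟨l, hl⟩
    obtain ⟨c, hc, hnc⟩ := not_acc_descend hl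
    exact ⟨⟨c, hnc⟩, hc⟩
  choose F hF using step
  set g : ℕ → {l : List A // ¬ Acc (ExtRel P) l} := fun n => F^[n] ⟨l₀, h0⟩ with hg
  have hstep : ∀ n, ExtRel P (g (n+1)).1 (g n).1 := by
    intro n
    have : g (n+1) = F (g n) := Function.iterate_succ_apply' F n _
    rw [this]
    exact hF (g n)
  choose e he using fun n => (hstep n).2
  have hPg : ∀ n, P (g (n+1)).1 := fun n => (hstep n).1
  have key : ∀ i k, ∃ t, (g (i+k)).1 = (g i).1 ++ t := by
    intro i k
    induction k with
    | zero => exact ⟨[], (List.append_nil _).symm⟩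
    | succ k ih =>
      obtain ⟨t, ht⟩ := ih
      refine ⟨t ++ [e (i+k)], ?_⟩
      rw [show i + (k+1) = (i+k)+1 from rfl, he (i+k), ht, List.append_assoc]
  have hinc : ∀ i j, i < j → ¬ e i ≤ e j := by
    intro i j hij
    obtain ⟨t, ht⟩ := key (i+1) (j - (i+1))
    rw [Nat.add_sub_cancel' hij] at ht
    have hj1 : (g (j+1)).1 = ((g i).1 ++ [e i]) ++ (t ++ [e j]) := by
      rw [he j, ht, he i, List.append_assoc]
    have hp := hPg j
    rw [hj1] at hp
    simp only [P] at hp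
    rw [List.pairwise_append] at hp
    exact (hp.2.2 (e i) (by simp) (e j) (by simp)).1
  obtain ⟨i, j, hij, hle⟩ := hA e
  exact hinc i j hij hle

lemma isWqo_subtype {A : Type u} [Preorder A] (hA : IsWqo A) (S : Set A) : IsWqo ↥S := by
  intro f
  obtain ⟨i, j, hij, hle⟩ := hA fun n => (f n : A)
  exact ⟨i, j, hij, Subtype.coe_le_coe.1 hle⟩

section Transfer2
variable {A B : Type u} [Preorder A] [Preorder B]

lemma extrel_map_mk (e : A ≃ B) (he : ∀ a b : A, a ≤ b ↔ e a ≤ e b) :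
    ∀ (l l' : List A),
      ExtRel (fun l : List A => l.Pairwise (fun a b => ¬ a ≤ b ∧ ¬ b ≤ a)) l' l →
      ExtRel (fun l : List B => l.Pairwise (fun a b => ¬ a ≤ b ∧ ¬ b ≤ a))
        (l'.map e) (l.map e) := by
  rintro l l' ⟨hp, a, rfl⟩
  refine ⟨?_, e a, by simp⟩
  show List.Pairwise _ (List.map _ _)
  rw [List.pairwise_map]
  exact hp.imp fun {x y} hxy =>
    ⟨fun hle => hxy.1 ((he x y).2 hle), fun hle => hxy.2 ((he y x).2 hle)⟩

lemma he_symm (e : A ≃ B) (he : ∀ a b : A, a ≤ b ↔ e a ≤ e b) :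
    ∀ a b : B, a ≤ b ↔ e.symm a ≤ e.symm b := by
  intro a b
  rw [he (e.symm a) (e.symm b), e.apply_symm_apply, e.apply_symm_apply]

lemma width_congr (e : A ≃ B) (he : ∀ a b : A, a ≤ b ↔ e a ≤ e b) :
    width A = width B := by
  set P : List A → Prop := fun l => l.Pairwise (fun a b => ¬ a ≤ b ∧ ¬ b ≤ a) with hPdef
  set Q : List B → Prop := fun l => l.Pairwise (fun a b => ¬ a ≤ b ∧ ¬ b ≤ a) with hQdef
  have h1 : ∀ (l l' : List A), ExtRel P l' l → ExtRel Q (l'.map e) (l.map e) :=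
    extrel_map_mk e he
  have h1' : ∀ (l l' : List B), ExtRel Q l' l → ExtRel P (l'.map e.symm) (l.map e.symm) :=
    extrel_map_mk e.symm (he_symm e he)
  have h2 : ∀ (l : List A) (c : List B), ExtRel Q c (l.map e) →
      ∃ l', ExtRel P l' l ∧ l'.map e = c := by
    intro l c hc
    have h3 := h1' (l.map e) c hc
    refine ⟨c.map e.symm, ?_, by simp⟩
    rwa [show (l.map e).map e.symm = l by simp] at h3
  by_cases hB : Acc (ExtRel Q) ([] : List B)
  · have hA' : Acc (ExtRel P) ([] : List A) :=
      acc_transfer (List.map e) (fun b b' => h1 b b') hB [] rfl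
    have hrank : hA'.rank = hB.rank :=
      rank_transfer (List.map e) (fun b b' => h1 b b') (fun b c => h2 b c) hB [] hA' rfl
    rw [width, width, treeRank, treeRank, dif_pos hA', dif_pos hB]
    exact hrank
  · have hA' : ¬ Acc (ExtRel P) ([] : List A) := by
      intro hacc
      exact hB (acc_transfer (List.map e.symm) (fun b b' => h1' b b') hacc [] rfl)
    rw [width, width, treeRank, treeRank, dif_neg hA', dif_neg hB]

end Transfer2

lemma width_step {A : Type u} [Preorder A] (hA : IsWqo A) {β : Ordinal.{u}}
    (h : width A = β + 1) :
    ∃ a : A, width ↥{y : A | ¬ y ≤ a ∧ ¬ a ≤ y} = β := by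
  have hacc : Acc (ExtRel (fun l : List A => l.Pairwise (fun a b => ¬ a ≤ b ∧ ¬ b ≤ a)))
      ([] : List A) := acc_of_wqo hA []
  have hw : width A = hacc.rank := by rw [width, treeRank, dif_pos hacc]
  have h' : hacc.rank = β + 1 := hw.symm.trans h
  rw [hacc.rank_eq] at h'
  have hlt : β < ⨆ t : {t // ExtRel (fun l : List A =>
      l.Pairwise (fun a b => ¬ a ≤ b ∧ ¬ b ≤ a)) t []}, Order.succ (hacc.inv t.2).rank := by
    rw [h', add_one_eq_succ]
    exact Order.lt_succ β
  rw [Ordinal.lt_iSup_iff] at hlt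
  obtain ⟨⟨t, ht⟩, hβt⟩ := hlt
  have hge : β ≤ (hacc.inv ht).rank := Order.lt_succ_iff.1 hβt
  have hle : Order.succ (hacc.inv ht).rank ≤ β + 1 := by
    rw [← h']
    exact Ordinal.le_iSup _ (⟨t, ht⟩ : {t // ExtRel _ t []})
  rw [add_one_eq_succ, Order.succ_le_succ_iff] at hle
  have hrank : (hacc.inv ht).rank = β := le_antisymm hle hge
  obtain ⟨a, hta⟩ := ht.2
  rw [List.nil_append] at hta
  subst hta
  refine ⟨a, ?_⟩
  set S : Set A := {y : A | ¬ y ≤ a ∧ ¬ a ≤ y} with hS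
  have haccS : Acc (ExtRel (fun l : List ↥S => l.Pairwise (fun a b => ¬ a ≤ b ∧ ¬ b ≤ a)))
      ([] : List ↥S) := acc_of_wqo (isWqo_subtype hA S) []
  set f : List ↥S → List A := fun l => a :: l.map Subtype.val with hf
  have h1 : ∀ (l l' : List ↥S),
      ExtRel (fun l : List ↥S => l.Pairwise (fun a b => ¬ a ≤ b ∧ ¬ b ≤ a)) l' l →
      ExtRel (fun l : List A => l.Pairwise (fun a b => ¬ a ≤ b ∧ ¬ b ≤ a)) (f l') (f l) := by
    rintro l l' ⟨hp, y, rfl⟩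
    refine ⟨?_, (y : A), by simp [hf]⟩
    show List.Pairwise _ (a :: _)
    rw [List.pairwise_cons]
    constructor
    · intro b hb
      rw [List.mem_map] at hb
      obtain ⟨z, _, rfl⟩ := hb
      exact ⟨z.2.2, z.2.1⟩
    · rw [List.pairwise_map]
      exact hp
  have h2 : ∀ (l : List ↥S) (c : List A),
      ExtRel (fun l : List A => l.Pairwise (fun a b => ¬ a ≤ b ∧ ¬ b ≤ a)) c (f l) →
      ∃ l', ExtRel (fun l : List ↥S => l.Pairwise (fun a b => ¬ a ≤ b ∧ ¬ b ≤ a)) l' l ∧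
        f l' = c := by
    rintro l c ⟨hq, b, rfl⟩
    have hq' : List.Pairwise (fun x y => ¬ x ≤ y ∧ ¬ y ≤ x)
        (a :: (l.map Subtype.val ++ [b])) := hq
    rw [List.pairwise_cons] at hq'
    have hbS : b ∈ S := by
      have := hq'.1 b (by simp)
      exact ⟨this.2, this.1⟩
    have hpair : List.Pairwise (fun x y : ↥S => ¬ x ≤ y ∧ ¬ y ≤ x) (l ++ [⟨b, hbS⟩]) := by
      have h5 := hq'.2
      rw [show l.map Subtype.val ++ [b] = (l ++ [(⟨b, hbS⟩ : ↥S)]).map Subtype.val by simp,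
        List.pairwise_map] at h5
      exact h5
    exact ⟨l ++ [⟨b, hbS⟩], ⟨hpair, ⟨b, hbS⟩, rfl⟩, by simp [hf]⟩
  have hfnil : f ([] : List ↥S) = [a] := rfl
  have htr := rank_transfer f h1 h2 (hacc.inv ht) [] haccS hfnil
  rw [width, treeRank, dif_pos haccS, htr, hrank]

lemma width_subtype_subtype {A : Type u} [Preorder A] (S : Set A) (Q : Set ↥S) (T : Set A)
    (hmem : ∀ y : A, y ∈ T ↔ ∃ h : y ∈ S, (⟨y, h⟩ : ↥S) ∈ Q) :
    width ↥T = width ↥Q :=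
  width_congr
    ⟨fun y => ⟨⟨y.1, ((hmem y.1).1 y.2).choose⟩, ((hmem y.1).1 y.2).choose_spec⟩,
     fun z => ⟨z.1.1, (hmem z.1.1).2 ⟨z.1.2, z.2⟩⟩,
     fun y => rfl, fun z => rfl⟩
    (fun y z => Iff.rfl)

lemma main_aux (n : ℕ) : ∀ (A : Type u) [Preorder A], IsWqo A → ∀ α : Ordinal.{u},
    width A = α + n →
    ∃ x : Fin n → A, (∀ i j, i ≠ j → ¬ x i ≤ x j) ∧
      width ↥{y : A | ∀ i, ¬ y ≤ x i ∧ ¬ x i ≤ y} = α := by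
  induction n with
  | zero =>
    intro A _ hA α h
    refine ⟨Fin.elim0, fun i => i.elim0, ?_⟩
    have h0 : width A = α := by simpa using h
    rw [← h0]
    exact (width_congr
      (⟨fun y => ⟨y, fun i => i.elim0⟩, fun z => z.1, fun y => rfl, fun z => rfl⟩ :
        A ≃ ↥{y : A | ∀ i : Fin 0, ¬ y ≤ Fin.elim0 i ∧ ¬ Fin.elim0 i ≤ y})
      (fun a b => Iff.rfl)).symm
  | succ n ih =>
    intro A _ hA α h
    have h' : width A = (α + n) + 1 := by
      rw [h, Nat.cast_succ, ← add_assoc]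
    obtain ⟨a, ha⟩ := width_step hA h'
    set S : Set A := {y : A | ¬ y ≤ a ∧ ¬ a ≤ y} with hS
    obtain ⟨x', hanti, hw'⟩ := ih ↥S (isWqo_subtype hA S) α ha
    set g : Fin (n+1) → A := Fin.cons a (fun i => (x' i : A)) with hg
    refine ⟨g, ?_, ?_⟩
    · intro i j hij
      obtain rfl | ⟨k, rfl⟩ := Fin.eq_zero_or_eq_succ i <;>
        obtain rfl | ⟨m, rfl⟩ := Fin.eq_zero_or_eq_succ j
      · exact absurd rfl hij
      · simp only [hg, Fin.cons_zero, Fin.cons_succ]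
        exact (x' m).2.2
      · simp only [hg, Fin.cons_zero, Fin.cons_succ]
        exact (x' k).2.1
      · simp only [hg, Fin.cons_succ]
        have hkm : k ≠ m := fun e => hij (by rw [e])
        intro hle
        exact hanti k m hkm (Subtype.coe_le_coe.1 hle)
    · rw [← hw']
      refine width_subtype_subtype S {z : ↥S | ∀ i : Fin n, ¬ z ≤ x' i ∧ ¬ x' i ≤ z} _ ?_
      intro y
      constructor
      · intro hy
        have h0 := hy 0
        simp only [hg, Fin.cons_zero] at h0
        refine ⟨h0, fun k => ?_⟩
        have hk := hy k.succ
        simp only [hg, Fin.cons_succ] at hk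
        exact hk
      · rintro ⟨h1, h2⟩ i
        obtain rfl | ⟨k, rfl⟩ := Fin.eq_zero_or_eq_succ i
        · simp only [hg, Fin.cons_zero]
          exact h1
        · have hk := h2 k
          simp only [hg, Fin.cons_succ]
          exact hk

/-- If `w(A) = α + n` with `n < ω`, then there is an antichain `x_1, …, x_n` in `A`
such that the substructure of elements incomparable to every `x_i` has width `α`. -/
theorem width_succ_decomposition (A : Type u) [Preorder A] (hA : IsWqo A)
    (α : Ordinal.{u}) (n : ℕ) (h : width A = α + n) :
    ∃ x : Fin n → A, (∀ i j, i ≠ j → ¬ x i ≤ x j) ∧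
      width ↥{y : A | ∀ i, ¬ y ≤ x i ∧ ¬ x i ≤ y} = α :=
  main_aux n A hA α h
end
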